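/- arXiv:2405.02450 — 6 statements merged into one kernel-verified Lean document; each statement's English description precedes it below -/
import Mathlib

section
/- Let n ≥ 1 and let a_1, …, a_n : ℝ^n → ℝ be smooth functions, 2π-periodic in each variable, satisfying ∂_{t_j} a_k = ∂_{t_k} a_j on ℝ^n for all j, k ∈ {1,…,n}, and suppose that for each j the function a_{j0}(t) = (1/2π) ∫₀^{2π} a_j(t_1, …, t_{j−1}, λ, t_{j+1}, …, t_n) dλ is constant, equal to α_j ∈ ℝ. Then the function A(t) = Σ_{j=1}^n ( ∫₀^{t_j} a_j(0, …, 0, λ, t_{j+1}, …, t_n) dλ − α_j t_j ), where in the j-th summand the first j−1 arguments of a_j are 0, the j-th argument is the integration variable λ, and the last arguments are t_{j+1}, …, t_n, is smooth, 2π-periodic in each variable, and satisfies ∂_{t_j} A(t) = a_j(t) − α_j for every j ∈ {1,…,n} and every t ∈ ℝ^n. -/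
/-! `A + ∑ⱼ αⱼ tⱼ` is the integral of `∑ⱼ aⱼ dtⱼ` along the staircase path from `0` to `t` that
switches on the coordinates `tₙ, …, t₁` one at a time. Its `j`-th leg contributes `aⱼ` at the
corner `c = (0, …, 0, tⱼ, …, tₙ)` to `∂ⱼ`; for a leg `k < j`, differentiating under the integral and
using `∂ⱼ aₖ = ∂ₖ aⱼ` turns the contribution into the increment of `aⱼ` along that leg, and these
increments telescope to `aⱼ t - aⱼ c`; legs `k > j` do not see `tⱼ`. Periodicity then follows by
integrating `∂ⱼ A = aⱼ - αⱼ` over a period, using the mean-value hypothesis. -/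

open Real Metric Set Function
open scoped ContDiff

section ParametricIntegral

variable {E F : Type*} [NormedAddCommGroup E] [NormedSpace ℝ E] [NormedAddCommGroup F]
  [NormedSpace ℝ F]

theorem hasFDerivAt_parametric_intervalIntegral_of_continuous [ProperSpace E] {f : E → ℝ → F}
    {f' : E → ℝ → E →L[ℝ] F} (hf : Continuous (uncurry f)) (hf' : Continuous (uncurry f'))
    (hderiv : ∀ x u, HasFDerivAt (f · u) (f' x u) x) (a b : ℝ) (x₀ : E) :
    HasFDerivAt (fun x => ∫ u in a..b, f x u) (∫ u in a..b, f' x₀ u) x₀ := by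
  obtain ⟨C, hC⟩ := ((isCompact_closedBall x₀ 1).prod isCompact_uIcc).exists_bound_of_continuousOn
    hf'.continuousOn
  exact intervalIntegral.hasFDerivAt_integral_of_dominated_of_fderiv_le (bound := fun _ => C)
    (ball_mem_nhds x₀ one_pos)
    (.of_forall fun x => (hf.uncurry_left x).aestronglyMeasurable)
    ((hf.uncurry_left x₀).intervalIntegrable a b)
    (hf'.uncurry_left x₀).aestronglyMeasurable
    (.of_forall fun u hu x hx => hC (x, u) ⟨ball_subset_closedBall hx, uIoc_subset_uIcc hu⟩)
    intervalIntegrable_const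
    (.of_forall fun u _ x _ => hderiv x u)

theorem integral_fderiv_apply_add_smul_eq_sub [CompleteSpace F] {g : E → F} (hg : ContDiff ℝ 1 g)
    (x v : E) (c : ℝ) :
    ∫ s in 0..c, fderiv ℝ g (x + s • v) v = g (x + c • v) - g x := by
  have hline : Continuous fun s : ℝ => x + s • v := by fun_prop
  have hderiv (s : ℝ) : HasDerivAt (fun s => g (x + s • v)) (fderiv ℝ g (x + s • v) v) s := by
    have := ((hasDerivAt_id s).smul_const v).const_add x
    rw [one_smul] at this
    exact (hg.differentiable one_ne_zero _).hasFDerivAt.comp_hasDerivAt s this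
  rw [intervalIntegral.integral_eq_sub_of_hasDerivAt (fun s _ => hderiv s)
    (((hg.continuous_fderiv one_ne_zero).comp hline).clm_apply continuous_const
      |>.intervalIntegrable 0 c)]
  simp

theorem hasLineDerivAt_intervalIntegral_of_fderiv_apply_eq [ProperSpace E] [CompleteSpace F]
    {f g : E → F} (hf : ContDiff ℝ 1 f) (hg : ContDiff ℝ 1 g) {v w : E}
    (hfg : ∀ x, fderiv ℝ f x v = fderiv ℝ g x w) (x : E) (c : ℝ) :
    HasLineDerivAt ℝ (fun y => ∫ l in 0..c, f (y + l • w)) (g (x + c • w) - g x) x v := by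
  have hf' : Continuous (uncurry fun y (l : ℝ) => fderiv ℝ f (y + l • w)) :=
    (hf.continuous_fderiv one_ne_zero).comp (by fun_prop)
  have hF := hasFDerivAt_parametric_intervalIntegral_of_continuous
    (f := fun y l => f (y + l • w)) (hf.continuous.comp (by fun_prop)) hf'
    (fun y l => (hasFDerivAt_comp_add_right _).2 (hf.differentiable one_ne_zero _).hasFDerivAt)
    0 c x
  convert hF.hasLineDerivAt v using 1
  rw [ContinuousLinearMap.intervalIntegral_apply ((hf'.uncurry_left x).intervalIntegrable 0 c),
    ← integral_fderiv_apply_add_smul_eq_sub hg]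
  simp only [hfg]

end ParametricIntegral

section ParametricIntegralContDiff

universe u

-- One universe for `E` and `F`: the induction below replaces `F` by `E →L[ℝ] F`.
variable {E F : Type u} [NormedAddCommGroup E] [NormedSpace ℝ E] [ProperSpace E]
  [NormedAddCommGroup F] [NormedSpace ℝ F]

theorem contDiff_parametric_intervalIntegral_of_contDiff {n : ℕ}
    {f : E → ℝ → F} (hf : ContDiff ℝ n (uncurry f)) (a b : ℝ) :
    ContDiff ℝ n fun x => ∫ u in a..b, f x u := by
  induction n generalizing F with
  | zero =>
    exact contDiff_zero.2 <|
      intervalIntegral.continuous_parametric_intervalIntegral_of_continuous' hf.continuous a b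
  | succ n ih =>
    have hf' : ContDiff ℝ n (uncurry fun x u => fderiv ℝ (f · u) x) :=
      (hf.comp (contDiff_snd.prodMk (contDiff_snd.comp contDiff_fst))).fderiv contDiff_fst
        le_rfl
    refine contDiff_succ_iff_hasFDerivAt.2 ⟨_, ih hf', fun x₀ => ?_⟩
    refine hasFDerivAt_parametric_intervalIntegral_of_continuous hf.continuous hf'.continuous
      (fun x u => ?_) a b x₀
    exact ((hf.comp (contDiff_id.prodMk contDiff_const)).differentiable (by simp) x).hasFDerivAt

/-- The substitution `l = c * u` moves the variable endpoint into the integrand. -/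
theorem contDiff_parametric_primitive_of_contDiff {n : ℕ} {f : E → ℝ → F}
    (hf : ContDiff ℝ n (uncurry f)) :
    ContDiff ℝ n fun p : E × ℝ => ∫ l in 0..p.2, f p.1 l := by
  have hrescale : (fun p : E × ℝ => ∫ l in 0..p.2, f p.1 l) =
      fun p => p.2 • ∫ u in (0 : ℝ)..1, f p.1 (p.2 * u) := by
    ext ⟨x, c⟩
    rcases eq_or_ne c 0 with rfl | hc
    · simp
    · simp [intervalIntegral.integral_comp_mul_left (f x) hc, smul_smul, hc]
  rw [hrescale]
  exact contDiff_snd.smul <| contDiff_parametric_intervalIntegral_of_contDiff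
    (f := fun (p : E × ℝ) u => f p.1 (p.2 * u)) (hf.comp ((contDiff_fst.comp contDiff_fst).prodMk
      ((contDiff_snd.comp contDiff_fst).mul contDiff_snd))) 0 1

end ParametricIntegralContDiff

theorem integral_add_smul_single_eq_integral_update {ι F : Type*} [DecidableEq ι]
    [NormedAddCommGroup F] [NormedSpace ℝ F] {f : (ι → ℝ) → F} {j : ι} {T : ℝ}
    (hf : ∀ x, f (x + T • Pi.single j 1) = f x) (t : ι → ℝ) :
    ∫ s in 0..T, f (t + s • Pi.single j 1) = ∫ l in 0..T, f (update t j l) := by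
  have hline (x : ι → ℝ) (s : ℝ) : x + s • Pi.single j 1 = update x j (s + x j) := by
    ext i
    rcases eq_or_ne i j with rfl | hi <;> simp [*, add_comm]
  have hperiodic : Periodic (fun l => f (update t j l)) T := fun l => by
    simpa [hline, update_idem, add_comm] using hf (update t j l)
  simp only [hline]
  rw [intervalIntegral.integral_comp_add_right (fun l => f (update t j l)), zero_add,
    add_comm, hperiodic.intervalIntegral_add_eq (t j) 0, zero_add]

theorem add_smul_single_eq_of_fderiv_apply_eq {ι F : Type*} [Fintype ι] [DecidableEq ι]
    [NormedAddCommGroup F] [NormedSpace ℝ F] [CompleteSpace F] {A f : (ι → ℝ) → F} {j : ι}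
    {T : ℝ} {c : F} (hA : ContDiff ℝ 1 A) (hf : Continuous f)
    (hAf : ∀ x, fderiv ℝ A x (Pi.single j 1) = f x - c)
    (hper : ∀ x, f (x + T • Pi.single j 1) = f x) (t : ι → ℝ)
    (hmean : ∫ l in 0..T, f (update t j l) = T • c) :
    A (t + T • Pi.single j 1) = A t := by
  have hline : Continuous fun s : ℝ => f (t + s • Pi.single j 1) := by fun_prop
  have hftc := integral_fderiv_apply_add_smul_eq_sub hA t (Pi.single j 1) T
  rw [intervalIntegral.integral_congr fun s _ => hAf _,
    intervalIntegral.integral_sub (hline.intervalIntegrable _ _) intervalIntegrable_const,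
    integral_add_smul_single_eq_integral_update hper, hmean, intervalIntegral.integral_const,
    sub_zero, sub_self] at hftc
  exact (sub_eq_zero.1 hftc.symm)

theorem hasLineDerivAt_sum_mul_apply {ι : Type*} [Fintype ι] [DecidableEq ι] (α t : ι → ℝ)
    (j : ι) : HasLineDerivAt ℝ (fun x => ∑ k, α k * x k) (α j) t (Pi.single j 1) := by
  have hlin := (HasFDerivAt.fun_sum (u := Finset.univ) fun k _ =>
    (hasFDerivAt_apply (𝕜 := ℝ) k t).const_mul (α k)).hasLineDerivAt (Pi.single j 1)
  rwa [show (∑ k, α k • ContinuousLinearMap.proj k) (Pi.single j 1 : ι → ℝ) = α j by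
    simp [Pi.single_apply]] at hlin

theorem Fin.sum_ite_telescope {M : Type*} [AddCommGroup M] {n : ℕ} (b : ℕ → M) (j : Fin n) :
    ∑ k : Fin n, (if k < j then b k - b (k + 1) else if k = j then b j else 0) = b 0 := by
  have hrange := Fin.sum_univ_eq_sum_range
    (fun m => if m < j then b m - b (m + 1) else if m = j then b j else 0) n
  simp only [Fin.val_fin_lt, Fin.val_inj] at hrange
  rw [hrange]
  obtain ⟨r, hr⟩ : ∃ r, n = j + 1 + r := ⟨n - (j + 1), by omega⟩
  generalize (j : ℕ) = m at hr ⊢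
  subst hr
  rw [Finset.sum_range_add, Finset.sum_range_succ,
    Finset.sum_congr rfl (fun i hi => if_pos (Finset.mem_range.1 hi)), Finset.sum_range_sub',
    Finset.sum_eq_zero fun i _ => by rw [if_neg (by omega), if_neg (by omega)]]
  simp

section StaircasePath

variable {n : ℕ} {F : Type} [NormedAddCommGroup F] [NormedSpace ℝ F]

def zeroBelow (m : ℕ) (t : Fin n → ℝ) : Fin n → ℝ := fun i => if (i : ℕ) < m then 0 else t i

@[simp]
theorem zeroBelow_zero (t : Fin n → ℝ) : zeroBelow 0 t = t := by
  ext i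
  simp [zeroBelow]

theorem contDiff_zeroBelow {N : WithTop ℕ∞} (m : ℕ) : ContDiff ℝ N (zeroBelow (n := n) m) :=
  contDiff_pi.2 fun i => by
    unfold zeroBelow
    split_ifs
    exacts [contDiff_const, contDiff_apply ℝ ℝ i]

theorem zeroBelow_add_smul_single_of_lt {m : ℕ} {j : Fin n} (hj : (j : ℕ) < m)
    (t : Fin n → ℝ) (s : ℝ) : zeroBelow m (t + s • Pi.single j 1) = zeroBelow m t := by
  ext i
  by_cases hi : (i : ℕ) < m
  · simp [zeroBelow, hi]
  · have : i ≠ j := by rintro rfl; exact hi hj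
    simp [zeroBelow, hi, this]

theorem zeroBelow_add_smul_single_of_le {m : ℕ} {j : Fin n} (hj : m ≤ j)
    (t : Fin n → ℝ) (s : ℝ) :
    zeroBelow m (t + s • Pi.single j 1) = zeroBelow m t + s • Pi.single j 1 := by
  ext i
  by_cases hi : (i : ℕ) < m
  · have : i ≠ j := by rintro rfl; omega
    simp [zeroBelow, hi, this]
  · simp [zeroBelow, hi]

theorem zeroBelow_succ_add_smul_single_eq (k : Fin n) (t : Fin n → ℝ) (l : ℝ) :
    zeroBelow (k + 1) t + l • Pi.single k 1 =
      fun i => if i < k then 0 else if i = k then l else t i := by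
  ext i
  rcases lt_trichotomy i k with h | rfl | h
  · simp [zeroBelow, h, h.ne, Nat.lt_succ_of_lt h]
  · simp [zeroBelow]
  · simp [zeroBelow, h.ne', not_lt.2 h.le, show ¬ (i : ℕ) < k + 1 by omega]

theorem zeroBelow_succ_add_smul_single (k : Fin n) (t : Fin n → ℝ) :
    zeroBelow (k + 1) t + t k • Pi.single k 1 = zeroBelow k t := by
  ext i
  rw [zeroBelow_succ_add_smul_single_eq]
  simp only [zeroBelow, Fin.val_fin_lt]
  split_ifs <;> simp_all

/-- The integral of `f` along the `k`-th leg of the staircase path from `0` to `t`, the segment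
from `zeroBelow (k + 1) t` to `zeroBelow k t`. -/
noncomputable def legIntegral (f : (Fin n → ℝ) → F) (k : Fin n) (t : Fin n → ℝ) : F :=
  ∫ l in 0..t k, f (zeroBelow (k + 1) t + l • Pi.single k 1)

theorem contDiff_legIntegral {N : ℕ} {f : (Fin n → ℝ) → F} (hf : ContDiff ℝ N f) (k : Fin n) :
    ContDiff ℝ N (legIntegral f k) := by
  exact (contDiff_parametric_primitive_of_contDiff
    (f := fun t l => f (zeroBelow (k + 1) t + l • Pi.single k 1))
    (hf.comp (((contDiff_zeroBelow _).comp contDiff_fst).add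
      (contDiff_snd.smul contDiff_const)))).comp
    (contDiff_id.prodMk (contDiff_apply ℝ ℝ k))

theorem hasLineDerivAt_legIntegral_of_lt (f : (Fin n → ℝ) → F) (t : Fin n → ℝ) {j k : Fin n}
    (hjk : j < k) : HasLineDerivAt ℝ (legIntegral f k) 0 t (Pi.single j 1) := by
  have hconst : (fun s : ℝ => legIntegral f k (t + s • Pi.single j 1)) =
      fun _ => legIntegral f k t := by
    ext s
    simp [legIntegral, zeroBelow_add_smul_single_of_lt (Nat.lt_succ_of_lt hjk), hjk.ne']
  unfold HasLineDerivAt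
  rw [hconst]
  exact hasDerivAt_const _ _

theorem hasLineDerivAt_legIntegral_self [CompleteSpace F] {f : (Fin n → ℝ) → F}
    (hf : Continuous f) (t : Fin n → ℝ) (k : Fin n) :
    HasLineDerivAt ℝ (legIntegral f k) (f (zeroBelow k t)) t (Pi.single k 1) := by
  have hprim : HasDerivAt (fun c => ∫ l in 0..c, f (zeroBelow (k + 1) t + l • Pi.single k 1))
      (f (zeroBelow k t)) (t k + 0) := by
    rw [add_zero, ← zeroBelow_succ_add_smul_single]
    exact (Continuous.integral_hasStrictDerivAt (by fun_prop) 0 (t k)).hasDerivAt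
  unfold HasLineDerivAt
  convert hprim.comp_const_add (t k) 0 using 2 with s
  simp [legIntegral, zeroBelow_add_smul_single_of_lt (Nat.lt_succ_self k)]

theorem hasLineDerivAt_legIntegral_of_gt [CompleteSpace F] {f g : (Fin n → ℝ) → F}
    (hf : ContDiff ℝ 1 f) (hg : ContDiff ℝ 1 g) {j k : Fin n} (hkj : k < j)
    (hfg : ∀ x, fderiv ℝ f x (Pi.single j 1) = fderiv ℝ g x (Pi.single k 1)) (t : Fin n → ℝ) :
    HasLineDerivAt ℝ (legIntegral f k) (g (zeroBelow k t) - g (zeroBelow (k + 1) t)) t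
      (Pi.single j 1) := by
  have h := hasLineDerivAt_intervalIntegral_of_fderiv_apply_eq hf hg hfg (zeroBelow (k + 1) t)
    (t k)
  rw [zeroBelow_succ_add_smul_single] at h
  unfold HasLineDerivAt at h ⊢
  convert h using 2 with s
  simp [legIntegral, zeroBelow_add_smul_single_of_le (Nat.succ_le_of_lt hkj), hkj.ne]

theorem hasLineDerivAt_sum_legIntegral [CompleteSpace F] {a : Fin n → (Fin n → ℝ) → F}
    (ha : ∀ k, ContDiff ℝ 1 (a k))
    (hcomm : ∀ j k x, fderiv ℝ (a k) x (Pi.single j 1) = fderiv ℝ (a j) x (Pi.single k 1))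
    (j : Fin n) (t : Fin n → ℝ) :
    HasLineDerivAt ℝ (fun x => ∑ k, legIntegral (a k) k x) (a j t) t (Pi.single j 1) := by
  have hterm (k : Fin n) : HasLineDerivAt ℝ (legIntegral (a k) k)
      (if k < j then a j (zeroBelow k t) - a j (zeroBelow (k + 1) t)
        else if k = j then a j (zeroBelow j t) else 0) t (Pi.single j 1) := by
    rcases lt_trichotomy k j with hkj | rfl | hjk
    · simpa [hkj] using hasLineDerivAt_legIntegral_of_gt (ha k) (ha j) hkj (hcomm j k) t
    · simpa using hasLineDerivAt_legIntegral_self (ha k).continuous t k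
    · simpa [not_lt.2 hjk.le, hjk.ne'] using hasLineDerivAt_legIntegral_of_lt (a k) t hjk
  have hsum := HasDerivAt.fun_sum (u := Finset.univ) fun k _ => hterm k
  rwa [Fin.sum_ite_telescope (fun m => a j (zeroBelow m t)), zeroBelow_zero] at hsum

end StaircasePath

theorem stmt_6_general (n : ℕ) (a : Fin n → (Fin n → ℝ) → ℝ) (α : Fin n → ℝ)
    (ha : ∀ j, ContDiff ℝ (⊤ : ℕ∞) (a j))
    (hper : ∀ k j (t : Fin n → ℝ), a k (t + (2 * π) • (Pi.single j 1 : Fin n → ℝ)) = a k t)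
    (hcomm : ∀ j k (t : Fin n → ℝ),
      fderiv ℝ (a k) t (Pi.single j 1) = fderiv ℝ (a j) t (Pi.single k 1))
    (havg : ∀ (j : Fin n) (t : Fin n → ℝ),
      (1 / (2 * π)) * ∫ l in (0 : ℝ)..(2 * π), a j (Function.update t j l) = α j)
    (A : (Fin n → ℝ) → ℝ)
    (hA : ∀ t : Fin n → ℝ,
      A t = ∑ j, ((∫ l in (0 : ℝ)..(t j),
          a j (fun i => if i < j then 0 else if i = j then l else t i)) - α j * t j)) :
    ContDiff ℝ (⊤ : ℕ∞) A ∧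
    (∀ (j : Fin n) (t : Fin n → ℝ), A (t + (2 * π) • (Pi.single j 1 : Fin n → ℝ)) = A t) ∧
    ∀ (j : Fin n) (t : Fin n → ℝ), fderiv ℝ A t (Pi.single j 1) = a j t - α j := by
  have ha1 (k : Fin n) : ContDiff ℝ 1 (a k) := (ha k).of_le (by exact_mod_cast le_top)
  have hA' : A = fun t => ∑ k, legIntegral (a k) k t - ∑ k, α k * t k := by
    ext t
    simp only [hA, Finset.sum_sub_distrib, legIntegral, zeroBelow_succ_add_smul_single_eq]
  have hsmooth : ContDiff ℝ ∞ A := by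
    rw [hA']
    refine .sub (contDiff_infty.2 fun m => .sum fun k _ => ?_)
      (.sum fun k _ => contDiff_const.mul (contDiff_apply ℝ ℝ k))
    exact contDiff_legIntegral ((ha k).of_le (by exact_mod_cast le_top)) k
  have hderiv (j : Fin n) (t : Fin n → ℝ) :
      HasLineDerivAt ℝ A (a j t - α j) t (Pi.single j 1) := by
    rw [hA']
    exact (hasLineDerivAt_sum_legIntegral ha1 hcomm j t).sub (hasLineDerivAt_sum_mul_apply α t j)
  have hfderiv (j : Fin n) (t : Fin n → ℝ) : fderiv ℝ A t (Pi.single j 1) = a j t - α j :=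
    (hsmooth.differentiable (by simp) t).lineDeriv_eq_fderiv.symm.trans (hderiv j t).lineDeriv
  refine ⟨hsmooth, fun j t => ?_, hfderiv⟩
  refine add_smul_single_eq_of_fderiv_apply_eq (hsmooth.of_le (by simp)) (ha j).continuous
    (hfderiv j) (hper j j) t ?_
  rw [smul_eq_mul, ← havg j t]
  field_simp

theorem stmt_6 (n : ℕ) (hn : 1 ≤ n) (a : Fin n → (Fin n → ℝ) → ℝ) (α : Fin n → ℝ)
    (ha : ∀ j, ContDiff ℝ (⊤ : ℕ∞) (a j))
    (hper : ∀ k j (t : Fin n → ℝ), a k (t + (2 * π) • (Pi.single j 1 : Fin n → ℝ)) = a k t)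
    (hcomm : ∀ j k (t : Fin n → ℝ),
      fderiv ℝ (a k) t (Pi.single j 1) = fderiv ℝ (a j) t (Pi.single k 1))
    (havg : ∀ (j : Fin n) (t : Fin n → ℝ),
      (1 / (2 * π)) * ∫ l in (0 : ℝ)..(2 * π), a j (Function.update t j l) = α j)
    (A : (Fin n → ℝ) → ℝ)
    (hA : ∀ t : Fin n → ℝ,
      A t = ∑ j, ((∫ l in (0 : ℝ)..(t j),
          a j (fun i => if i < j then 0 else if i = j then l else t i)) - α j * t j)) :
    ContDiff ℝ (⊤ : ℕ∞) A ∧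
    (∀ (j : Fin n) (t : Fin n → ℝ), A (t + (2 * π) • (Pi.single j 1 : Fin n → ℝ)) = A t) ∧
    ∀ (j : Fin n) (t : Fin n → ℝ), fderiv ℝ A t (Pi.single j 1) = a j t - α j :=
  stmt_6_general n a α ha hper hcomm havg A hA
end

section
/- Let α ∈ ℝ with e^(2πiα) ≠ 1, let f : ℝ → ℂ be continuous and 2π-periodic, and let v : ℝ → ℂ be differentiable and 2π-periodic with v′(s) + iα v(s) = f(s) for every s ∈ ℝ. Then for every t ∈ ℝ, |v(t)| ≤ (2π / |e^(2πiα) − 1|) · sup_{s∈ℝ} |f(s)|. -/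
open Real

/-!
With the integrating factor `e^{iαs}`, `(e^{iαs} v(t + s))' = e^{iαs} f(t + s)`. Integrating
over one period and using the periodicity of `v` gives
`(e^{2πiα} - 1) v(t) = ∫₀^{2π} e^{iαs} f(t + s) ds`,
whose integrand has modulus at most `sup ‖f‖`.
-/

theorem Function.Periodic.bddAbove_range_norm {E : Type*} [NormedAddCommGroup E] {f : ℝ → E}
    {T : ℝ} (hper : Function.Periodic f T) (hT : T ≠ 0) (hf : Continuous f) :
    BddAbove (Set.range fun s => ‖f s‖) := by
  rw [show (fun s => ‖f s‖) = norm ∘ f from rfl, Set.range_comp]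
  exact ((hper.compact_of_continuous hT hf).image continuous_norm).bddAbove

theorem hasDerivAt_exp_mul_mul_comp_add {c : ℂ} {t s : ℝ} {v : ℝ → ℂ}
    (hv : DifferentiableAt ℝ v (t + s)) :
    HasDerivAt (fun s : ℝ => Complex.exp (s * c) * v (t + s))
      (Complex.exp (s * c) * (deriv v (t + s) + c * v (t + s))) s := by
  have hexp : HasDerivAt (fun s : ℝ => Complex.exp (s * c)) (Complex.exp (s * c) * c) s :=
    (((hasDerivAt_id s).ofReal_comp).mul_const c).cexp.congr_deriv (by simp)
  have hshift : HasDerivAt (fun s => v (t + s)) (deriv v (t + s)) s :=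
    hv.hasDerivAt.comp_const_add t s
  exact (hexp.mul hshift).congr_deriv (by ring)

theorem integral_exp_mul_mul_comp_add_eq {c : ℂ} {T : ℝ} {f v : ℝ → ℂ} (hf : Continuous f)
    (hv : Differentiable ℝ v) (hvper : Function.Periodic v T)
    (hode : ∀ s, deriv v s + c * v s = f s) (t : ℝ) :
    ∫ s in (0)..T, Complex.exp (s * c) * f (t + s) = (Complex.exp (T * c) - 1) * v t := by
  rw [intervalIntegral.integral_eq_sub_of_hasDerivAt
    (fun s _ => hode (t + s) ▸ hasDerivAt_exp_mul_mul_comp_add (hv (t + s)))]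
  · simp only [Complex.ofReal_zero, zero_mul, Complex.exp_zero, one_mul, add_zero, hvper t]
    ring
  · exact Continuous.intervalIntegrable (by fun_prop) _ _

theorem stmt_9 (α : ℝ)
    (hα : Complex.exp (2 * (π : ℂ) * Complex.I * (α : ℂ)) ≠ 1)
    (f : ℝ → ℂ) (hf : Continuous f) (hfper : ∀ s, f (s + 2 * π) = f s)
    (v : ℝ → ℂ) (hv : Differentiable ℝ v) (hvper : ∀ s, v (s + 2 * π) = v s)
    (hode : ∀ s, deriv v s + Complex.I * (α : ℂ) * v s = f s) :
    ∀ t : ℝ, ‖v t‖ ≤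
      (2 * π / ‖Complex.exp (2 * (π : ℂ) * Complex.I * (α : ℂ)) - 1‖) *
        ⨆ s : ℝ, ‖f s‖ := by
  intro t
  have hbdd := Function.Periodic.bddAbove_range_norm hfper two_pi_pos.ne' hf
  have hrep := integral_exp_mul_mul_comp_add_eq hf hv hvper hode t
  have hbound : ‖∫ s in (0)..2 * π, Complex.exp (s * (Complex.I * α)) * f (t + s)‖ ≤
      (⨆ s : ℝ, ‖f s‖) * (2 * π) := by
    refine (intervalIntegral.norm_integral_le_of_norm_le_const fun s _ => ?_).trans_eq
      (by rw [sub_zero, abs_of_pos two_pi_pos])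
    rw [norm_mul, show (s : ℂ) * (Complex.I * α) = ↑(s * α) * Complex.I by push_cast; ring,
      Complex.norm_exp_ofReal_mul_I, one_mul]
    exact le_ciSup hbdd (t + s)
  rw [hrep, norm_mul, show ((2 * π : ℝ) : ℂ) * (Complex.I * α) = 2 * π * Complex.I * α by
    push_cast; ring] at hbound
  have hpos : 0 < ‖Complex.exp (2 * (π : ℂ) * Complex.I * (α : ℂ)) - 1‖ :=
    norm_pos_iff.2 (sub_ne_zero.2 hα)
  rw [div_mul_eq_mul_div, le_div_iff₀ hpos]
  linarith
end

section
/- Let n ≥ 1 and let a_1, …, a_n : ℝ^n → ℝ be smooth functions, 2π-periodic in each variable. For each ξ ∈ ℤ let u_ξ : ℝ^n → ℂ be smooth, and for j ∈ {1,…,n} set f_{j,ξ}(t) = ∂_{t_j} u_ξ(t) + i a_j(t) ξ u_ξ(t). Assume: (i) for every k ∈ ℕ there is C_k > 0 such that |u_ξ(t)| ≤ C_k (1+|ξ|)^(−k) for all t ∈ ℝ^n and ξ ∈ ℤ; (ii) for every j ∈ {1,…,n}, every multi-index α ∈ ℕ^n and every k ∈ ℕ there is C_{α,j,k} > 0 such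 that |∂_t^α f_{j,ξ}(t)| ≤ C_{α,j,k} (1+|ξ|)^(−k) for all t ∈ ℝ^n and ξ ∈ ℤ. Then for every multi-index α ∈ ℕ^n and every k ∈ ℕ there is C_{α,k} > 0 such that |∂_t^α u_ξ(t)| ≤ C_{α,k} (1+|ξ|)^(−k) for all t ∈ ℝ^n and ξ ∈ ℤ. -/
/-!
Induction on the order of `α`. Since partial derivatives of smooth functions commute, one
derivative `∂_j` can be peeled off in any direction with `α j ≠ 0`, and
`∂_j u_ξ = f_{j,ξ} - i ξ a_j u_ξ` gives `∂^α u_ξ = ∂^{α - e_j} f_{j,ξ} - i ξ ∂^{α - e_j} (a_j u_ξ)`.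
The first term decays rapidly by hypothesis. By the Leibniz rule the second is a combination of
derivatives of `a_j`, bounded since `a_j` is smooth and periodic, times derivatives of `u_ξ` of
lower order, which decay rapidly by induction; rapid decay absorbs the extra factor `ξ`.
-/

open Real

/-- Partial derivative in the `j`-th coordinate direction. -/
noncomputable def pd (n : ℕ) (j : Fin n) (g : (Fin n → ℝ) → ℂ) : (Fin n → ℝ) → ℂ :=
  fun t => fderiv ℝ g t (Pi.single j 1)

/-- Multi-index derivative `∂^α = ∂_1^{α 1} ⋯ ∂_n^{α n}`. -/
noncomputable def mderiv (n : ℕ) (α : Fin n → ℕ) (g : (Fin n → ℝ) → ℂ) : (Fin n → ℝ) → ℂ :=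
  (List.finRange n).foldr (fun j G => (pd n j)^[α j] G) g

variable {n : ℕ}

section PartialDerivatives

variable {g h : (Fin n → ℝ) → ℂ}

theorem contDiff_pd (hg : ContDiff ℝ (⊤ : ℕ∞) g) (j : Fin n) : ContDiff ℝ (⊤ : ℕ∞) (pd n j g) :=
  (hg.fderiv_right (by exact_mod_cast le_top)).clm_apply contDiff_const

theorem pd_add (hg : ContDiff ℝ (⊤ : ℕ∞) g) (hh : ContDiff ℝ (⊤ : ℕ∞) h) (j : Fin n) :
    pd n j (g + h) = pd n j g + pd n j h := by
  ext t
  simp [pd, fderiv_add (hg.differentiable (by simp) t) (hh.differentiable (by simp) t)]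

theorem pd_const_mul (hg : ContDiff ℝ (⊤ : ℕ∞) g) (c : ℂ) (j : Fin n) :
    pd n j (fun t => c * g t) = fun t => c * pd n j g t := by
  ext t
  simp [pd, fderiv_const_mul (hg.differentiable (by simp) t) c]

theorem pd_mul (hg : ContDiff ℝ (⊤ : ℕ∞) g) (hh : ContDiff ℝ (⊤ : ℕ∞) h) (j : Fin n) :
    pd n j (fun t => g t * h t) = fun t => pd n j g t * h t + g t * pd n j h t := by
  ext t
  simp only [pd, fderiv_fun_mul (hg.differentiable (by simp) t) (hh.differentiable (by simp) t),
    add_apply, smul_apply, smul_eq_mul]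
  ring

theorem pd_comm (hg : ContDiff ℝ (⊤ : ℕ∞) g) (i j : Fin n) :
    pd n i (pd n j g) = pd n j (pd n i g) := by
  have hg' : Differentiable ℝ (fderiv ℝ g) :=
    (hg.fderiv_right (m := 1) (WithTop.coe_le_coe.mpr le_top)).differentiable (by simp)
  have hpd : ∀ (j : Fin n) (w t : Fin n → ℝ),
      fderiv ℝ (pd n j g) t w = fderiv ℝ (fderiv ℝ g) t w (Pi.single j 1) := by
    intro j w t
    unfold pd
    simp [fderiv_clm_apply (hg' t) (differentiableAt_const _)]
  ext t
  simp only [pd, hpd]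
  have h2 : minSmoothness ℝ 2 ≤ ((⊤ : ℕ∞) : WithTop ℕ∞) := by
    simpa using WithTop.coe_le_coe.mpr (le_top : (2 : ℕ∞) ≤ ⊤)
  exact (hg.contDiffAt.isSymmSndFDerivAt h2).eq _ _

theorem Function.Periodic.pd {c : Fin n → ℝ} (hg : Function.Periodic g c) (j : Fin n) :
    Function.Periodic (pd n j g) c := by
  intro t
  simp only [_root_.pd, ← fderiv_comp_add_right, hg.funext]

end PartialDerivatives

section MultiIndex

variable {ι : Type*} [DecidableEq ι]

theorem exists_lt_eq_add_single_of_ne_zero {α : ι → ℕ} (hα : α ≠ 0) :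
    ∃ j γ, γ < α ∧ α = γ + Pi.single j 1 := by
  obtain ⟨j, hj⟩ := Function.ne_iff.mp hα
  have hle : Pi.single j 1 ≤ α := by
    intro i
    rcases eq_or_ne i j with rfl | hij
    · simpa [Nat.one_le_iff_ne_zero] using hj
    · simp [hij]
  refine ⟨j, α - Pi.single j 1, ?_, (tsub_add_cancel_of_le hle).symm⟩
  conv_rhs => rw [← tsub_add_cancel_of_le hle]
  exact lt_add_of_pos_right _ (by simpa [Pi.lt_def] using ⟨j, by simp⟩)

theorem induction_add_single [Finite ι] {P : (ι → ℕ) → Prop} (zero : P 0)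
    (add_single : ∀ γ j, P γ → P (γ + Pi.single j 1)) (α : ι → ℕ) : P α := by
  induction α using WellFoundedLT.induction with
  | _ α ih =>
    rcases eq_or_ne α 0 with rfl | hα
    · exact zero
    obtain ⟨j, γ, hγ, rfl⟩ := exists_lt_eq_add_single_of_ne_zero hα
    exact add_single γ j (ih γ hγ)

end MultiIndex

section MultiDerivatives

variable {g h : (Fin n → ℝ) → ℂ}

theorem contDiff_iterate_pd (hg : ContDiff ℝ (⊤ : ℕ∞) g) (j : Fin n) (m : ℕ) :
    ContDiff ℝ (⊤ : ℕ∞) ((pd n j)^[m] g) := by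
  induction m generalizing g with
  | zero => exact hg
  | succ m ih => exact ih (contDiff_pd hg j)

theorem contDiff_foldr_iterate_pd (hg : ContDiff ℝ (⊤ : ℕ∞) g) (α : Fin n → ℕ)
    (l : List (Fin n)) : ContDiff ℝ (⊤ : ℕ∞) (l.foldr (fun j G => (pd n j)^[α j] G) g) := by
  induction l with
  | nil => exact hg
  | cons i l ih => exact contDiff_iterate_pd ih i (α i)

theorem contDiff_mderiv (hg : ContDiff ℝ (⊤ : ℕ∞) g) (α : Fin n → ℕ) :
    ContDiff ℝ (⊤ : ℕ∞) (mderiv n α g) :=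
  contDiff_foldr_iterate_pd hg α _

theorem pd_iterate_pd_comm (hg : ContDiff ℝ (⊤ : ℕ∞) g) (i j : Fin n) (m : ℕ) :
    pd n j ((pd n i)^[m] g) = (pd n i)^[m] (pd n j g) := by
  induction m generalizing g with
  | zero => rfl
  | succ m ih =>
    rw [Function.iterate_succ_apply, Function.iterate_succ_apply, ih (contDiff_pd hg i),
      pd_comm hg]

theorem pd_mderiv_comm (hg : ContDiff ℝ (⊤ : ℕ∞) g) (j : Fin n) (α : Fin n → ℕ) :
    pd n j (mderiv n α g) = mderiv n α (pd n j g) := by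
  unfold mderiv
  induction List.finRange n with
  | nil => rfl
  | cons i l ih =>
    rw [List.foldr_cons, List.foldr_cons, ← ih,
      pd_iterate_pd_comm (contDiff_foldr_iterate_pd hg α l)]

theorem foldr_iterate_pd_add_single (hg : ContDiff ℝ (⊤ : ℕ∞) g) (α : Fin n → ℕ) {j : Fin n}
    {l : List (Fin n)} (hl : l.Nodup) (hj : j ∈ l) :
    l.foldr (fun i G => (pd n i)^[(α + Pi.single j 1 : Fin n → ℕ) i] G) g
      = pd n j (l.foldr (fun i G => (pd n i)^[α i] G) g) := by
  induction l with
  | nil => simp at hj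
  | cons i l ih =>
    obtain ⟨hil, hl⟩ := List.nodup_cons.mp hl
    rw [List.foldr_cons, List.foldr_cons]
    rcases eq_or_ne i j with rfl | hij
    · have hrest : l.foldr (fun i' G => (pd n i')^[(α + Pi.single i 1 : Fin n → ℕ) i'] G) g
          = l.foldr (fun i' G => (pd n i')^[α i'] G) g :=
        List.foldr_ext _ _ _ fun i' hi' _ => by
          simp [Pi.single_eq_of_ne (ne_of_mem_of_not_mem hi' hil)]
      rw [hrest]
      simp only [Pi.add_apply, Pi.single_eq_same, Function.iterate_succ_apply']
    · rw [ih hl (List.mem_cons.mp hj |>.resolve_left hij.symm),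
        pd_iterate_pd_comm (contDiff_foldr_iterate_pd hg α l)]
      simp [Pi.single_eq_of_ne hij]

theorem mderiv_add_single (hg : ContDiff ℝ (⊤ : ℕ∞) g) (α : Fin n → ℕ) (j : Fin n) :
    mderiv n (α + Pi.single j 1) g = mderiv n α (pd n j g) := by
  rw [← pd_mderiv_comm hg]
  exact foldr_iterate_pd_add_single hg α (List.nodup_finRange n) (List.mem_finRange j)

theorem mderiv_zero (g : (Fin n → ℝ) → ℂ) : mderiv n 0 g = g := by
  simp [mderiv]

theorem mderiv_add (hg : ContDiff ℝ (⊤ : ℕ∞) g) (hh : ContDiff ℝ (⊤ : ℕ∞) h) (α : Fin n → ℕ) :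
    mderiv n α (g + h) = mderiv n α g + mderiv n α h := by
  induction α using induction_add_single generalizing g h with
  | zero => simp only [mderiv_zero]
  | add_single γ j ih =>
    rw [mderiv_add_single (g := g + h) (hg.add hh), mderiv_add_single hg, mderiv_add_single hh,
      pd_add hg hh, ih (contDiff_pd hg j) (contDiff_pd hh j)]

theorem mderiv_const_mul (hg : ContDiff ℝ (⊤ : ℕ∞) g) (c : ℂ) (α : Fin n → ℕ) :
    mderiv n α (fun t => c * g t) = fun t => c * mderiv n α g t := by
  induction α using induction_add_single generalizing g with
  | zero => simp only [mderiv_zero]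
  | add_single γ j ih =>
    rw [mderiv_add_single (contDiff_const.mul hg), mderiv_add_single hg, pd_const_mul hg,
      ih (contDiff_pd hg j)]

theorem Function.Periodic.mderiv (hg : ContDiff ℝ (⊤ : ℕ∞) g) {c : Fin n → ℝ}
    (hper : Function.Periodic g c) (α : Fin n → ℕ) : Function.Periodic (mderiv n α g) c := by
  induction α using induction_add_single generalizing g with
  | zero => simpa only [mderiv_zero] using hper
  | add_single γ j ih =>
    rw [mderiv_add_single hg]
    exact ih (contDiff_pd hg j) (hper.pd j)

end MultiDerivatives

theorem Continuous.exists_bound_of_periodic {ι E : Type*} [Fintype ι] [DecidableEq ι]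
    [NormedAddCommGroup E] {g : (ι → ℝ) → E} (hg : Continuous g) {p : ℝ} (hp : 0 < p)
    (hper : ∀ k, Function.Periodic g (p • Pi.single k 1)) : ∃ M, ∀ t, ‖g t‖ ≤ M := by
  obtain ⟨M, hM⟩ := (isCompact_Icc (a := 0) (b := fun _ => p)).exists_bound_of_continuousOn
    hg.continuousOn
  refine ⟨M, fun t => ?_⟩
  set shift : ι → ℝ := ∑ i, toIcoDiv hp 0 (t i) • p • Pi.single i 1
  have hshift : Function.Periodic g shift :=
    Finset.sum_induction _ _ (fun _ _ h₁ h₂ => h₁.add_period h₂) (fun _ => by simp)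
      fun i _ => (hper i).zsmul _
  have hmem : t - shift ∈ Set.Icc 0 fun _ => p := by
    have hcoord : ∀ i, (t - shift) i = toIcoMod hp 0 (t i) := by
      intro i
      simp [shift, Finset.sum_apply, Pi.single_apply, ← self_sub_toIcoDiv_zsmul, mul_comm]
    have hIco := fun i => toIcoMod_mem_Ico hp 0 (t i)
    simp only [zero_add, Set.mem_Ico] at hIco
    exact ⟨fun i => by simpa [hcoord] using (hIco i).1,
      fun i => by simpa [hcoord] using (hIco i).2.le⟩
  simpa [hshift.sub_eq] using hM _ hmem

theorem exists_bound_mderiv_of_periodic {g : (Fin n → ℝ) → ℂ} (hg : ContDiff ℝ (⊤ : ℕ∞) g)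
    {p : ℝ} (hp : 0 < p) (hper : ∀ k, Function.Periodic g (p • Pi.single k 1))
    (β : Fin n → ℕ) : ∃ M, ∀ t, ‖mderiv n β g t‖ ≤ M :=
  (contDiff_mderiv hg β).continuous.exists_bound_of_periodic hp fun k => (hper k).mderiv hg β

def RapidDecay {X E : Type*} [Norm E] (v : ℤ → X → E) : Prop :=
  ∀ k : ℕ, ∃ C > (0 : ℝ), ∀ (t : X) (ξ : ℤ), ‖v ξ t‖ ≤ C * ((1 + |(ξ : ℝ)|) ^ k)⁻¹

section RapidDecay

variable {X E : Type*} [SeminormedAddCommGroup E] {v w : ℤ → X → E}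

theorem RapidDecay.add (hv : RapidDecay v) (hw : RapidDecay w) :
    RapidDecay fun ξ t => v ξ t + w ξ t := by
  intro k
  obtain ⟨C₁, hC₁, hv⟩ := hv k
  obtain ⟨C₂, hC₂, hw⟩ := hw k
  refine ⟨C₁ + C₂, by positivity, fun t ξ => ?_⟩
  calc ‖v ξ t + w ξ t‖ ≤ ‖v ξ t‖ + ‖w ξ t‖ := norm_add_le _ _
    _ ≤ C₁ * ((1 + |(ξ : ℝ)|) ^ k)⁻¹ + C₂ * ((1 + |(ξ : ℝ)|) ^ k)⁻¹ :=
      add_le_add (hv t ξ) (hw t ξ)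
    _ = (C₁ + C₂) * ((1 + |(ξ : ℝ)|) ^ k)⁻¹ := by ring

theorem RapidDecay.of_norm_le (hv : RapidDecay v) (M : ℝ) (m : ℕ)
    (hw : ∀ t ξ, ‖w ξ t‖ ≤ M * (1 + |(ξ : ℝ)|) ^ m * ‖v ξ t‖) : RapidDecay w := by
  intro k
  obtain ⟨C, hC, hv⟩ := hv (k + m)
  refine ⟨max M 1 * C, by positivity, fun t ξ => ?_⟩
  have hξ : (0 : ℝ) < 1 + |(ξ : ℝ)| := by positivity
  calc ‖w ξ t‖ ≤ M * (1 + |(ξ : ℝ)|) ^ m * ‖v ξ t‖ := hw t ξ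
    _ ≤ max M 1 * (1 + |(ξ : ℝ)|) ^ m * (C * ((1 + |(ξ : ℝ)|) ^ (k + m))⁻¹) := by
      gcongr
      · exact le_max_left _ _
      · exact hv t ξ
    _ = max M 1 * C * ((1 + |(ξ : ℝ)|) ^ k)⁻¹ := by
      rw [pow_add]
      field_simp

end RapidDecay

theorem rapidDecay_mderiv_mul {g : (Fin n → ℝ) → ℂ} (hg : ContDiff ℝ (⊤ : ℕ∞) g)
    (hg_bdd : ∀ β, ∃ M, ∀ t, ‖mderiv n β g t‖ ≤ M) {v : ℤ → (Fin n → ℝ) → ℂ}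
    (hv : ∀ ξ, ContDiff ℝ (⊤ : ℕ∞) (v ξ)) {γ : Fin n → ℕ}
    (hγ : ∀ δ ≤ γ, RapidDecay fun ξ => mderiv n δ (v ξ)) :
    RapidDecay fun ξ => mderiv n γ (fun t => g t * v ξ t) := by
  induction γ using WellFoundedLT.induction generalizing g v with
  | _ γ ih =>
    rcases eq_or_ne γ 0 with rfl | hγ0
    · obtain ⟨M, hM⟩ := hg_bdd 0
      refine (hγ 0 le_rfl).of_norm_le M 0 fun t ξ => ?_
      simp only [mderiv_zero, pow_zero, mul_one, norm_mul] at hM ⊢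
      exact mul_le_mul_of_nonneg_right (hM t) (norm_nonneg _)
    obtain ⟨j, γ, hlt, rfl⟩ := exists_lt_eq_add_single_of_ne_zero hγ0
    have hleibniz : ∀ ξ, mderiv n (γ + Pi.single j 1) (fun t => g t * v ξ t)
        = fun t => mderiv n γ (fun t => pd n j g t * v ξ t) t
          + mderiv n γ (fun t => g t * pd n j (v ξ) t) t := fun ξ => by
      rw [mderiv_add_single (hg.mul (hv ξ)), pd_mul hg (hv ξ)]
      exact mderiv_add ((contDiff_pd hg j).mul (hv ξ)) (hg.mul (contDiff_pd (hv ξ) j)) γ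
    simp only [hleibniz]
    refine RapidDecay.add (ih γ hlt (contDiff_pd hg j) (fun β => ?_) hv fun δ hδ => ?_)
      (ih γ hlt hg hg_bdd (fun ξ => contDiff_pd (hv ξ) j) fun δ hδ => ?_)
    · rw [← mderiv_add_single hg]
      exact hg_bdd _
    · exact hγ δ (hδ.trans hlt.le)
    · simp only [← mderiv_add_single (hv _)]
      exact hγ _ (add_le_add hδ le_rfl)

theorem rapidDecay_mderiv_of_pd_eq {A : Fin n → (Fin n → ℝ) → ℂ}
    (hA : ∀ j, ContDiff ℝ (⊤ : ℕ∞) (A j)) (hA_bdd : ∀ j β, ∃ M, ∀ t, ‖mderiv n β (A j) t‖ ≤ M)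
    {u : ℤ → (Fin n → ℝ) → ℂ} (hu : ∀ ξ, ContDiff ℝ (⊤ : ℕ∞) (u ξ))
    {f : Fin n → ℤ → (Fin n → ℝ) → ℂ} (hf : ∀ j ξ, ContDiff ℝ (⊤ : ℕ∞) (f j ξ))
    (hpd_u : ∀ j ξ, pd n j (u ξ) = f j ξ + fun t => -(Complex.I * ξ) * (A j t * u ξ t))
    (hu_decay : RapidDecay u) (hf_decay : ∀ j α, RapidDecay fun ξ => mderiv n α (f j ξ))
    (α : Fin n → ℕ) : RapidDecay fun ξ => mderiv n α (u ξ) := by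
  induction α using WellFoundedLT.induction with
  | _ α ih =>
    rcases eq_or_ne α 0 with rfl | hα
    · simpa only [mderiv_zero] using hu_decay
    obtain ⟨j, γ, hlt, rfl⟩ := exists_lt_eq_add_single_of_ne_zero hα
    have hstep : ∀ ξ, mderiv n (γ + Pi.single j 1) (u ξ) = fun t => mderiv n γ (f j ξ) t
        + -(Complex.I * ξ) * mderiv n γ (fun t => A j t * u ξ t) t := fun ξ => by
      rw [mderiv_add_single (hu ξ), hpd_u, mderiv_add (hf j ξ)
        (contDiff_const.mul ((hA j).mul (hu ξ))), mderiv_const_mul ((hA j).mul (hu ξ))]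
      rfl
    simp only [hstep]
    refine (hf_decay j γ).add ((rapidDecay_mderiv_mul (hA j) (hA_bdd j) hu
      fun δ hδ => ih δ (hδ.trans_lt hlt)).of_norm_le 1 1 fun t ξ => ?_)
    rw [norm_mul, norm_neg, norm_mul, Complex.norm_I, Complex.norm_intCast, one_mul, pow_one,
      one_mul]
    gcongr
    linarith

theorem stmt_10_general (n : ℕ) (a : Fin n → (Fin n → ℝ) → ℝ)
    (ha : ∀ j, ContDiff ℝ (⊤ : ℕ∞) (a j))
    (haper : ∀ j k (t : Fin n → ℝ), a j (t + (2 * π) • (Pi.single k 1 : Fin n → ℝ)) = a j t)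
    (u : ℤ → (Fin n → ℝ) → ℂ) (hu : ∀ ξ, ContDiff ℝ (⊤ : ℕ∞) (u ξ))
    (f : Fin n → ℤ → (Fin n → ℝ) → ℂ)
    (hf : ∀ (j : Fin n) (ξ : ℤ) (t : Fin n → ℝ),
      f j ξ t = pd n j (u ξ) t + Complex.I * (a j t : ℂ) * (ξ : ℂ) * u ξ t)
    (h1 : ∀ k : ℕ, ∃ C > (0 : ℝ), ∀ (t : Fin n → ℝ) (ξ : ℤ),
      ‖u ξ t‖ ≤ C * ((1 + |(ξ : ℝ)|) ^ k)⁻¹)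
    (h2 : ∀ (j : Fin n) (α : Fin n → ℕ) (k : ℕ), ∃ C > (0 : ℝ), ∀ (t : Fin n → ℝ) (ξ : ℤ),
      ‖mderiv n α (f j ξ) t‖ ≤ C * ((1 + |(ξ : ℝ)|) ^ k)⁻¹) :
    ∀ (α : Fin n → ℕ) (k : ℕ), ∃ C > (0 : ℝ), ∀ (t : Fin n → ℝ) (ξ : ℤ),
      ‖mderiv n α (u ξ) t‖ ≤ C * ((1 + |(ξ : ℝ)|) ^ k)⁻¹ := by
  set A : Fin n → (Fin n → ℝ) → ℂ := fun j t => (a j t : ℂ)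
  have hA : ∀ j, ContDiff ℝ (⊤ : ℕ∞) (A j) := fun j => Complex.ofRealCLM.contDiff.comp (ha j)
  have hA_bdd : ∀ j β, ∃ M, ∀ t, ‖mderiv n β (A j) t‖ ≤ M := fun j =>
    exists_bound_mderiv_of_periodic (hA j) two_pi_pos fun k t =>
      congrArg Complex.ofReal (haper j k t)
  have hpd_u : ∀ j ξ, pd n j (u ξ) = f j ξ + fun t => -(Complex.I * ξ) * (A j t * u ξ t) := by
    intro j ξ
    ext t
    simp only [hf, A, Pi.add_apply]
    ring
  have hf_smooth : ∀ j ξ, ContDiff ℝ (⊤ : ℕ∞) (f j ξ) := fun j ξ => funext (hf j ξ) ▸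
    (contDiff_pd (hu ξ) j).add (((contDiff_const.mul (hA j)).mul contDiff_const).mul (hu ξ))
  exact rapidDecay_mderiv_of_pd_eq hA hA_bdd hu hf_smooth hpd_u h1 h2

theorem stmt_10 (n : ℕ) (hn : 1 ≤ n) (a : Fin n → (Fin n → ℝ) → ℝ)
    (ha : ∀ j, ContDiff ℝ (⊤ : ℕ∞) (a j))
    (haper : ∀ j k (t : Fin n → ℝ), a j (t + (2 * π) • (Pi.single k 1 : Fin n → ℝ)) = a j t)
    (u : ℤ → (Fin n → ℝ) → ℂ) (hu : ∀ ξ, ContDiff ℝ (⊤ : ℕ∞) (u ξ))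
    (f : Fin n → ℤ → (Fin n → ℝ) → ℂ)
    (hf : ∀ (j : Fin n) (ξ : ℤ) (t : Fin n → ℝ),
      f j ξ t = pd n j (u ξ) t + Complex.I * (a j t : ℂ) * (ξ : ℂ) * u ξ t)
    (h1 : ∀ k : ℕ, ∃ C > (0 : ℝ), ∀ (t : Fin n → ℝ) (ξ : ℤ),
      ‖u ξ t‖ ≤ C * ((1 + |(ξ : ℝ)|) ^ k)⁻¹)
    (h2 : ∀ (j : Fin n) (α : Fin n → ℕ) (k : ℕ), ∃ C > (0 : ℝ), ∀ (t : Fin n → ℝ) (ξ : ℤ),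
      ‖mderiv n α (f j ξ) t‖ ≤ C * ((1 + |(ξ : ℝ)|) ^ k)⁻¹) :
    ∀ (α : Fin n → ℕ) (k : ℕ), ∃ C > (0 : ℝ), ∀ (t : Fin n → ℝ) (ξ : ℤ),
      ‖mderiv n α (u ξ) t‖ ≤ C * ((1 + |(ξ : ℝ)|) ^ k)⁻¹ :=
  stmt_10_general n a ha haper u hu f hf h1 h2
end

section
/- Let n ≥ 1, p ∈ ℕ, and u : ℤ^n × ℤ → ℂ. Assume: (i) Σ_{(τ,ξ)∈ℤ^n×ℤ} |u(τ,ξ)|² (1+|(τ,ξ)|)^(−2p) < ∞; (ii) there exists c > 0 such that for every k ∈ ℕ there is C_k > 0 with |u(τ,ξ)| ≤ C_k (1+|(τ,ξ)|)^(−k) for all τ ∈ ℤ^n and ξ ∈ ℤ with |ξ| ≤ c|τ|. Then there exists D > 0 such that Σ_{τ∈ℤ^n} |u(τ,ξ)| ≤ D (1+|ξ|)^(2(n+p)) for every ξ ∈ ℤ. -/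
/-!
The weighted ℓ² bound gives `‖u q‖ ≤ √S (1 + |q|)^p`, where `S` is the value of the weighted sum.
Fix `ξ`. On the cone `|ξ| ≤ c|τ|` the decay with `k = 2n` gives
`‖u (τ, ξ)‖ ≤ C ∏ⱼ (1 + |τⱼ|)⁻²`, summable over `ℤⁿ` with a sum independent of `ξ`. Off the cone
`|τ| < |ξ|/c`, so `τ` lies in a box of `O((1 + |ξ|)ⁿ)` points, at each of which
`‖u (τ, ξ)‖ = O((1 + |ξ|)^p)`.
-/

/-- Euclidean norm of `(τ, ξ) ∈ ℤⁿ × ℤ`, viewed inside `ℝ^(n+1)`. -/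
noncomputable def pairNorm (n : ℕ) (q : (Fin n → ℤ) × ℤ) : ℝ :=
  Real.sqrt ((∑ j, ((q.1 j : ℝ)) ^ 2) + ((q.2 : ℝ)) ^ 2)

/-- Euclidean norm of `τ ∈ ℤⁿ`, viewed inside `ℝⁿ`. -/
noncomputable def vecNorm (n : ℕ) (τ : Fin n → ℤ) : ℝ :=
  Real.sqrt (∑ j, ((τ j : ℝ)) ^ 2)

open Finset

lemma le_sqrt_tsum_mul_pow {α : Type*} {a w : α → ℝ} {p : ℕ} (hw : ∀ q, 0 < w q)
    (h : Summable fun q => a q ^ 2 * (w q ^ (2 * p))⁻¹) (q : α) :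
    a q ≤ √(∑' q, a q ^ 2 * (w q ^ (2 * p))⁻¹) * w q ^ p := by
  have hwq : 0 < w q ^ (2 * p) := pow_pos (hw q) _
  have hq : a q ^ 2 ≤ (∑' q, a q ^ 2 * (w q ^ (2 * p))⁻¹) * w q ^ (2 * p) := by
    rw [← div_le_iff₀ hwq, div_eq_mul_inv]
    exact h.le_tsum q fun q _ => by have := hw q; positivity
  calc a q ≤ |a q| := le_abs_self _
    _ ≤ √((∑' q, a q ^ 2 * (w q ^ (2 * p))⁻¹) * w q ^ (2 * p)) := Real.abs_le_sqrt hq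
    _ = _ := by rw [Real.sqrt_mul' _ hwq.le, pow_mul', Real.sqrt_sq (pow_pos (hw q) _).le]

lemma summable_one_add_abs_sq_inv : Summable fun k : ℤ => ((1 + |(k : ℝ)|) ^ 2)⁻¹ := by
  have hnat : Summable fun m : ℕ => ((1 + (m : ℝ)) ^ 2)⁻¹ := by
    refine ((summable_nat_add_iff 1).2 (Real.summable_nat_pow_inv.2 one_lt_two)).congr fun m => ?_
    simp [add_comm]
  exact .of_nat_of_neg (hnat.congr fun m => by simp) (hnat.congr fun m => by simp)

lemma summable_prod_one_add_abs_sq_inv (n : ℕ) :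
    Summable fun τ : Fin n → ℤ => ∏ j, ((1 + |(τ j : ℝ)|) ^ 2)⁻¹ := by
  induction n with
  | zero => exact .of_finite
  | succ m ih =>
    have h := summable_one_add_abs_sq_inv.mul_of_nonneg ih (fun _ => by positivity)
      fun _ => by positivity
    refine (h.comp_injective (Fin.consEquiv fun _ => ℤ).symm.injective).congr fun τ => ?_
    simp [Fin.consEquiv, Fin.prod_univ_succ, Fin.tail, mul_comm]

lemma summable_and_tsum_le_of_le_add_ite {ι : Type*} [DecidableEq ι] {f g : ι → ℝ}
    {s : Finset ι} {B : ℝ} (hf : ∀ i, 0 ≤ f i) (hg : Summable g)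
    (hfg : ∀ i, f i ≤ g i + if i ∈ s then B else 0) :
    Summable f ∧ ∑' i, f i ≤ ∑' i, g i + #s * B := by
  have hite : Summable fun i => if i ∈ s then B else 0 :=
    summable_of_ne_finset_zero fun i hi => if_neg hi
  have hsum := hg.add hite
  refine ⟨hsum.of_nonneg_of_le hf hfg, ?_⟩
  calc ∑' i, f i ≤ ∑' i, (g i + if i ∈ s then B else 0) :=
        (hsum.of_nonneg_of_le hf hfg).tsum_le_tsum hfg hsum
    _ = ∑' i, g i + #s * B := by
        rw [hg.tsum_add hite, tsum_eq_sum fun i hi => if_neg hi, sum_ite_mem, inter_self,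
          sum_const, nsmul_eq_mul]

section Norms

variable {n : ℕ}

lemma pairNorm_nonneg (q : (Fin n → ℤ) × ℤ) : 0 ≤ pairNorm n q := Real.sqrt_nonneg _

lemma abs_le_vecNorm (τ : Fin n → ℤ) (j : Fin n) : |(τ j : ℝ)| ≤ vecNorm n τ :=
  Real.abs_le_sqrt (single_le_sum (f := fun i => (τ i : ℝ) ^ 2) (fun _ _ => sq_nonneg _)
    (mem_univ j))

lemma abs_le_pairNorm (τ : Fin n → ℤ) (ξ : ℤ) (j : Fin n) :
    |(τ j : ℝ)| ≤ pairNorm n (τ, ξ) :=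
  Real.abs_le_sqrt <| le_add_of_le_of_nonneg
    (single_le_sum (f := fun i => (τ i : ℝ) ^ 2) (fun _ _ => sq_nonneg _) (mem_univ j))
    (sq_nonneg _)

lemma pairNorm_le_vecNorm_add_abs (τ : Fin n → ℤ) (ξ : ℤ) :
    pairNorm n (τ, ξ) ≤ vecNorm n τ + |(ξ : ℝ)| := by
  have hv : vecNorm n τ ^ 2 = ∑ j, (τ j : ℝ) ^ 2 :=
    Real.sq_sqrt (sum_nonneg fun _ _ => sq_nonneg _)
  have hv0 : 0 ≤ vecNorm n τ := Real.sqrt_nonneg _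
  rw [pairNorm, Real.sqrt_le_left (by positivity), add_sq, ← hv, sq_abs]
  nlinarith [abs_nonneg (ξ : ℝ)]

lemma inv_one_add_pairNorm_pow_le_prod (τ : Fin n → ℤ) (ξ : ℤ) :
    ((1 + pairNorm n (τ, ξ)) ^ (2 * n))⁻¹ ≤ ∏ j, ((1 + |(τ j : ℝ)|) ^ 2)⁻¹ := by
  rw [prod_inv_distrib, pow_mul, ← Fin.prod_const n ((1 + pairNorm n (τ, ξ)) ^ 2)]
  exact inv_anti₀ (by positivity) <| prod_le_prod (fun _ _ => by positivity) fun j _ =>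
    pow_le_pow_left₀ (by positivity) (add_le_add_right (abs_le_pairNorm τ ξ j) 1) 2

lemma mem_piFinset_Icc_of_vecNorm_le {τ : Fin n → ℤ} {M : ℕ} (h : vecNorm n τ ≤ M) :
    τ ∈ Fintype.piFinset fun _ : Fin n => Icc (-(M : ℤ)) M := by
  simp only [Fintype.mem_piFinset, mem_Icc, ← abs_le]
  exact fun j => by exact_mod_cast (abs_le_vecNorm τ j).trans h

lemma card_piFinset_Icc_natCeil_le {c x : ℝ} (hc : 0 < c) (hx : 0 ≤ x) :
    (#(Fintype.piFinset fun _ : Fin n => Icc (-(⌈x / c⌉₊ : ℤ)) ⌈x / c⌉₊) : ℝ) ≤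
      ((3 + 2 * c⁻¹) * (1 + x)) ^ n := by
  have hcard : #(Fintype.piFinset fun _ : Fin n => Icc (-(⌈x / c⌉₊ : ℤ)) ⌈x / c⌉₊) =
      (2 * ⌈x / c⌉₊ + 1) ^ n := by
    simp only [Fintype.card_piFinset, Int.card_Icc, prod_const, card_univ, Fintype.card_fin]
    congr 1
    omega
  have hceil := Nat.ceil_lt_add_one (div_nonneg hx hc.le)
  rw [hcard]
  push_cast
  gcongr
  rw [div_eq_mul_inv] at hceil ⊢
  nlinarith [inv_pos.2 hc]

lemma one_add_pairNorm_le_of_mul_vecNorm_le {c : ℝ} (hc : 0 < c) {τ : Fin n → ℤ}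
    {ξ : ℤ} (h : c * vecNorm n τ ≤ |(ξ : ℝ)|) :
    1 + pairNorm n (τ, ξ) ≤ (1 + c⁻¹) * (1 + |(ξ : ℝ)|) := by
  have hv : vecNorm n τ ≤ c⁻¹ * |(ξ : ℝ)| := by rwa [← div_eq_inv_mul, le_div_iff₀' hc]
  have := pairNorm_le_vecNorm_add_abs τ ξ
  nlinarith [inv_pos.2 hc]

end Norms

lemma le_decay_add_ite_mem_box {n p : ℕ} {f : (Fin n → ℤ) → ℝ} {ξ : ℤ} {c C s : ℝ} (hc : 0 < c)
    (hC : 0 ≤ C) (hs : 0 ≤ s)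
    (hfar : ∀ τ, |(ξ : ℝ)| ≤ c * vecNorm n τ → f τ ≤ C * ((1 + pairNorm n (τ, ξ)) ^ (2 * n))⁻¹)
    (hpoly : ∀ τ, f τ ≤ s * (1 + pairNorm n (τ, ξ)) ^ p) (τ : Fin n → ℤ) :
    f τ ≤ C * ∏ j, ((1 + |(τ j : ℝ)|) ^ 2)⁻¹ +
      if τ ∈ Fintype.piFinset fun _ : Fin n => Icc (-(⌈|(ξ : ℝ)| / c⌉₊ : ℤ)) ⌈|(ξ : ℝ)| / c⌉₊
      then s * ((1 + c⁻¹) * (1 + |(ξ : ℝ)|)) ^ p else 0 := by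
  by_cases hτ : |(ξ : ℝ)| ≤ c * vecNorm n τ
  · calc f τ ≤ C * ((1 + pairNorm n (τ, ξ)) ^ (2 * n))⁻¹ := hfar τ hτ
      _ ≤ C * ∏ j, ((1 + |(τ j : ℝ)|) ^ 2)⁻¹ :=
        mul_le_mul_of_nonneg_left (inv_one_add_pairNorm_pow_le_prod τ ξ) hC
      _ ≤ _ := le_add_of_nonneg_right (by split_ifs <;> positivity)
  · replace hτ := (not_le.1 hτ).le
    rw [if_pos (mem_piFinset_Icc_of_vecNorm_le (((le_div_iff₀' hc).2 hτ).trans (Nat.le_ceil _)))]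
    calc f τ ≤ s * (1 + pairNorm n (τ, ξ)) ^ p := hpoly τ
      _ ≤ s * ((1 + c⁻¹) * (1 + |(ξ : ℝ)|)) ^ p :=
        mul_le_mul_of_nonneg_left (pow_le_pow_left₀ (by linarith [pairNorm_nonneg (τ, ξ)])
          (one_add_pairNorm_le_of_mul_vecNorm_le hc hτ) p) hs
      _ ≤ _ := le_add_of_nonneg_left (by positivity)

lemma add_mul_pow_le_mul_pow_two_mul {a b X : ℝ} (ha : 0 ≤ a) (hb : 0 ≤ b) (hX : 1 ≤ X)
    (m : ℕ) : a + b * X ^ m ≤ (a + b + 1) * X ^ (2 * m) := by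
  have hXm : X ^ m ≤ X ^ (2 * m) := pow_le_pow_right₀ hX (by omega)
  have hY : 1 ≤ X ^ (2 * m) := one_le_pow₀ hX
  nlinarith

theorem stmt_11_general (n : ℕ) (p : ℕ) (u : (Fin n → ℤ) × ℤ → ℂ)
    (h1 : Summable (fun q : (Fin n → ℤ) × ℤ =>
      ‖u q‖ ^ 2 * ((1 + pairNorm n q) ^ (2 * p))⁻¹))
    (h2 : ∃ c > (0 : ℝ), ∀ k : ℕ, ∃ C > (0 : ℝ), ∀ (τ : Fin n → ℤ) (ξ : ℤ),
      |(ξ : ℝ)| ≤ c * vecNorm n τ →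
      ‖u (τ, ξ)‖ ≤ C * ((1 + pairNorm n (τ, ξ)) ^ k)⁻¹) :
    ∃ D > (0 : ℝ), ∀ ξ : ℤ,
      Summable (fun τ : Fin n → ℤ => ‖u (τ, ξ)‖) ∧
      ∑' τ : Fin n → ℤ, ‖u (τ, ξ)‖ ≤ D * (1 + |(ξ : ℝ)|) ^ (2 * (n + p)) := by
  obtain ⟨c, hc, hdecay⟩ := h2
  obtain ⟨C, hC, hfar⟩ := hdecay (2 * n)
  set S := ∑' q, ‖u q‖ ^ 2 * ((1 + pairNorm n q) ^ (2 * p))⁻¹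
  have hpoly := le_sqrt_tsum_mul_pow (w := fun q => 1 + pairNorm n q)
    (fun q => by linarith [pairNorm_nonneg q]) h1
  set T := ∑' τ : Fin n → ℤ, ∏ j, ((1 + |(τ j : ℝ)|) ^ 2)⁻¹
  set A := √S * (1 + c⁻¹) ^ p * (3 + 2 * c⁻¹) ^ n
  refine ⟨C * T + A + 1, by positivity, fun ξ => ?_⟩
  obtain ⟨hsum, hle⟩ := summable_and_tsum_le_of_le_add_ite (fun τ => norm_nonneg _)
    ((summable_prod_one_add_abs_sq_inv n).mul_left C)
    (le_decay_add_ite_mem_box hc hC.le (Real.sqrt_nonneg S) (hfar · ξ) (hpoly ⟨·, ξ⟩))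
  refine ⟨hsum, hle.trans ?_⟩
  rw [tsum_mul_left]
  grw [card_piFinset_Icc_natCeil_le hc (abs_nonneg _)]
  calc C * T + ((3 + 2 * c⁻¹) * (1 + |(ξ : ℝ)|)) ^ n * (√S * ((1 + c⁻¹) * (1 + |(ξ : ℝ)|)) ^ p)
      = C * T + A * (1 + |(ξ : ℝ)|) ^ (n + p) := by simp only [A, mul_pow, pow_add]; ring
    _ ≤ _ := add_mul_pow_le_mul_pow_two_mul (by positivity) (by positivity)
        (le_add_of_nonneg_right (abs_nonneg _)) _

theorem stmt_11 (n : ℕ) (hn : 1 ≤ n) (p : ℕ) (u : (Fin n → ℤ) × ℤ → ℂ)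
    (h1 : Summable (fun q : (Fin n → ℤ) × ℤ =>
      ‖u q‖ ^ 2 * ((1 + pairNorm n q) ^ (2 * p))⁻¹))
    (h2 : ∃ c > (0 : ℝ), ∀ k : ℕ, ∃ C > (0 : ℝ), ∀ (τ : Fin n → ℤ) (ξ : ℤ),
      |(ξ : ℝ)| ≤ c * vecNorm n τ →
      ‖u (τ, ξ)‖ ≤ C * ((1 + pairNorm n (τ, ξ)) ^ k)⁻¹) :
    ∃ D > (0 : ℝ), ∀ ξ : ℤ,
      Summable (fun τ : Fin n → ℤ => ‖u (τ, ξ)‖) ∧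
      ∑' τ : Fin n → ℤ, ‖u (τ, ξ)‖ ≤ D * (1 + |(ξ : ℝ)|) ^ (2 * (n + p)) :=
  stmt_11_general n p u h1 h2
end

section
/- Let N ≥ 1, m ∈ ℝ, p ∈ ℕ, c ∈ (0,1), and C > 0. Let F : ℤ^N × ℤ^N → ℂ satisfy symbol-type bounds of order m, and let g : ℤ^N → ℂ satisfy |g(ζ)| ≤ C(1+|ζ|)^p for all ζ ∈ ℤ^N. Then for every k ∈ ℕ there exists D′_k > 0 such that Σ_{η ∈ ℤ^N, |η| ≥ c|ξ|} |F(η, ξ−η)| · |g(ξ−η)| ≤ D′_k (1+|ξ|)^(−k) for every ξ ∈ ℤ^N. -/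
/-- Inclusion of `ℤᴺ` into `ℝᴺ` with the Euclidean norm. -/
noncomputable def iZ (N : ℕ) (ξ : Fin N → ℤ) : EuclideanSpace ℝ (Fin N) :=
  WithLp.toLp 2 (fun i => (ξ i : ℝ))

/-- `F` satisfies symbol-type bounds of order `m`. -/
def SymbolBounds (N : ℕ) (m : ℝ) (F : (Fin N → ℤ) → (Fin N → ℤ) → ℂ) : Prop :=
  ∀ k : ℕ, ∃ D > (0 : ℝ), ∀ η ζ : Fin N → ℤ,
    ‖F η ζ‖ ≤ D * ((1 + ‖iZ N η‖) ^ k)⁻¹ * (1 + ‖iZ N ζ‖) ^ m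

/-! On the region `‖η‖ ≥ c‖ξ‖` Peetre's inequality gives `⟨ξ - η⟩ ≤ ⟨ξ⟩⟨η⟩` and
`c⟨ξ⟩ ≤ ⟨η⟩` (with `⟨x⟩ = 1 + ‖x‖`), so both the polynomial growth of the summand in `ξ - η`
and the decay demanded in `ξ` are paid for by the rapid decay of `F` in `η`. What is left is
`⟨η⟩^(-2N)`, which is summable over `ℤᴺ` because it is dominated by `∏ᵢ ⟨ηᵢ⟩⁻²`. -/

lemma summable_pi_prod_of_nonneg {α : Type*} {f : α → ℝ} (hf₀ : 0 ≤ f) (hf : Summable f) :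
    ∀ n : ℕ, Summable fun x : Fin n → α => ∏ i, f (x i)
  | 0 => .of_finite
  | n + 1 => by
    rw [← (Fin.consEquiv fun _ => α).summable_iff]
    refine (hf.mul_of_nonneg (summable_pi_prod_of_nonneg hf₀ hf n) hf₀
      fun _ => Finset.prod_nonneg fun _ _ => hf₀ _).congr fun x => ?_
    simp [Fin.consEquiv, Fin.prod_univ_succ]

lemma summable_one_add_abs_int_sq_inv : Summable fun n : ℤ => ((1 + |(n : ℝ)|) ^ 2)⁻¹ := by
  have h : Summable fun n : ℕ => ((1 + (n : ℝ)) ^ 2)⁻¹ := by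
    simpa [add_comm] using
      (summable_nat_add_iff 1).mpr (Real.summable_nat_pow_inv.mpr one_lt_two)
  exact .of_nat_of_neg (by simpa using h) (by simpa using h)

lemma iZ_sub (N : ℕ) (ξ η : Fin N → ℤ) : iZ N (ξ - η) = iZ N ξ - iZ N η := by
  ext i; simp [iZ]

lemma inv_one_add_norm_iZ_pow_le_prod (N : ℕ) (η : Fin N → ℤ) :
    ((1 + ‖iZ N η‖) ^ (2 * N))⁻¹ ≤ ∏ i, ((1 + |(η i : ℝ)|) ^ 2)⁻¹ := by
  rw [Finset.prod_inv_distrib, pow_mul, ← Fin.prod_const]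
  refine inv_anti₀ (by positivity) (Finset.prod_le_prod (fun _ _ => by positivity) fun i _ => ?_)
  gcongr
  simpa [iZ] using PiLp.norm_apply_le (iZ N η) i

lemma summable_inv_one_add_norm_iZ_pow (N : ℕ) :
    Summable fun η : Fin N → ℤ => ((1 + ‖iZ N η‖) ^ (2 * N))⁻¹ :=
  (summable_pi_prod_of_nonneg (fun _ => by positivity) summable_one_add_abs_int_sq_inv N
    ).of_nonneg_of_le (fun _ => by positivity) (inv_one_add_norm_iZ_pow_le_prod N)

lemma one_add_norm_sub_le_mul {E : Type*} [SeminormedAddCommGroup E] (x y : E) :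
    1 + ‖x - y‖ ≤ (1 + ‖x‖) * (1 + ‖y‖) := by
  nlinarith [norm_sub_le x y, norm_nonneg x, norm_nonneg y]

lemma pow_mul_inv_pow_le {a b c s : ℝ} (hc : 0 < c) (hb : 0 < b) (hs : 0 ≤ s)
    (hsab : s ≤ a * b) (hcb : c * b ≤ a) (k M j : ℕ) :
    s ^ M * (a ^ (k + 2 * M + j))⁻¹ ≤ (c ^ (k + M))⁻¹ * (b ^ k)⁻¹ * (a ^ j)⁻¹ := by
  have ha : 0 < a := (mul_pos hc hb).trans_le hcb
  rw [← mul_inv, ← mul_inv, ← div_eq_mul_inv, div_le_iff₀ (by positivity), inv_mul_eq_div,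
    le_div_iff₀ (by positivity)]
  calc s ^ M * (c ^ (k + M) * b ^ k * a ^ j)
      ≤ (a * b) ^ M * (c ^ (k + M) * b ^ k * a ^ j) := by gcongr
    _ = a ^ (M + j) * (c * b) ^ (k + M) := by ring
    _ ≤ a ^ (M + j) * a ^ (k + M) := by gcongr
    _ = a ^ (k + 2 * M + j) := by ring

lemma one_add_norm_sub_pow_mul_inv_le {E : Type*} [SeminormedAddCommGroup E] {c : ℝ}
    (hc₀ : 0 < c) (hc₁ : c ≤ 1) {x y : E} (hxy : c * ‖x‖ ≤ ‖y‖) (k M j : ℕ) :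
    (1 + ‖x - y‖) ^ M * ((1 + ‖y‖) ^ (k + 2 * M + j))⁻¹ ≤
      (c ^ (k + M))⁻¹ * ((1 + ‖x‖) ^ k)⁻¹ * ((1 + ‖y‖) ^ j)⁻¹ :=
  pow_mul_inv_pow_le hc₀ (by positivity) (by positivity)
    ((one_add_norm_sub_le_mul x y).trans_eq (mul_comm _ _)) (by nlinarith [norm_nonneg x]) k M j

lemma norm_mul_norm_le_of_symbol_bound {N : ℕ} {F : (Fin N → ℤ) → (Fin N → ℤ) → ℂ}
    {g : (Fin N → ℤ) → ℂ} {m c C D : ℝ} {k p M₀ : ℕ} (hm : m ≤ M₀) (hc₀ : 0 < c) (hc₁ : c ≤ 1)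
    (hC : 0 ≤ C) (hD : 0 ≤ D)
    (hF : ∀ η ζ, ‖F η ζ‖ ≤
      D * ((1 + ‖iZ N η‖) ^ (k + 2 * (M₀ + p) + 2 * N))⁻¹ * (1 + ‖iZ N ζ‖) ^ m)
    (hg : ∀ ζ, ‖g ζ‖ ≤ C * (1 + ‖iZ N ζ‖) ^ p) {ξ η : Fin N → ℤ}
    (hξη : c * ‖iZ N ξ‖ ≤ ‖iZ N η‖) :
    ‖F η (ξ - η)‖ * ‖g (ξ - η)‖ ≤ D * C * (c ^ (k + (M₀ + p)))⁻¹ *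
      ((1 + ‖iZ N ξ‖) ^ k)⁻¹ * ((1 + ‖iZ N η‖) ^ (2 * N))⁻¹ := by
  set s := 1 + ‖iZ N (ξ - η)‖
  have hsm : s ^ m ≤ s ^ M₀ := by
    exact_mod_cast Real.rpow_le_rpow_of_exponent_le (by simp [s]) hm
  calc ‖F η (ξ - η)‖ * ‖g (ξ - η)‖
      ≤ (D * ((1 + ‖iZ N η‖) ^ (k + 2 * (M₀ + p) + 2 * N))⁻¹ * s ^ m) * (C * s ^ p) :=
        mul_le_mul (hF η (ξ - η)) (hg (ξ - η)) (norm_nonneg _) (by positivity)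
    _ ≤ (D * ((1 + ‖iZ N η‖) ^ (k + 2 * (M₀ + p) + 2 * N))⁻¹ * s ^ M₀) * (C * s ^ p) := by
        gcongr
    _ = D * C * (s ^ (M₀ + p) * ((1 + ‖iZ N η‖) ^ (k + 2 * (M₀ + p) + 2 * N))⁻¹) := by ring
    _ ≤ D * C * ((c ^ (k + (M₀ + p)))⁻¹ * ((1 + ‖iZ N ξ‖) ^ k)⁻¹ *
          ((1 + ‖iZ N η‖) ^ (2 * N))⁻¹) := by
        refine mul_le_mul_of_nonneg_left ?_ (by positivity)
        simpa only [s, iZ_sub] using one_add_norm_sub_pow_mul_inv_le hc₀ hc₁ hξη k (M₀ + p) (2 * N)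
    _ = _ := by ring

theorem stmt_13_general (N : ℕ) (m : ℝ) (p : ℕ) (c : ℝ) (hc0 : 0 < c) (hc1 : c < 1)
    (C : ℝ) (hC : 0 < C) (F : (Fin N → ℤ) → (Fin N → ℤ) → ℂ) (hF : SymbolBounds N m F)
    (g : (Fin N → ℤ) → ℂ)
    (hg : ∀ ζ : Fin N → ℤ, ‖g ζ‖ ≤ C * (1 + ‖iZ N ζ‖) ^ p) :
    ∀ k : ℕ, ∃ D' > (0 : ℝ), ∀ ξ : Fin N → ℤ,
      Summable (fun η : Fin N → ℤ =>
        if c * ‖iZ N ξ‖ ≤ ‖iZ N η‖ then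
          ‖F η (ξ - η)‖ * ‖g (ξ - η)‖ else 0) ∧
      (∑' η : Fin N → ℤ,
        if c * ‖iZ N ξ‖ ≤ ‖iZ N η‖ then
          ‖F η (ξ - η)‖ * ‖g (ξ - η)‖ else 0)
        ≤ D' * ((1 + ‖iZ N ξ‖) ^ k)⁻¹ := by
  intro k
  set M₀ := ⌈m⌉₊
  obtain ⟨D, hD, hFD⟩ := hF (k + 2 * (M₀ + p) + 2 * N)
  set w : (Fin N → ℤ) → ℝ := fun η => ((1 + ‖iZ N η‖) ^ (2 * N))⁻¹
  have hw : Summable w := summable_inv_one_add_norm_iZ_pow N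
  have hT : 0 < ∑' η, w η := hw.tsum_pos (fun _ => by positivity) 0 (by positivity)
  refine ⟨D * C * (c ^ (k + (M₀ + p)))⁻¹ * ∑' η, w η, by positivity, fun ξ => ?_⟩
  have hbound : ∀ η, (if c * ‖iZ N ξ‖ ≤ ‖iZ N η‖ then ‖F η (ξ - η)‖ * ‖g (ξ - η)‖ else 0) ≤
      D * C * (c ^ (k + (M₀ + p)))⁻¹ * ((1 + ‖iZ N ξ‖) ^ k)⁻¹ * w η := fun η => by
    split_ifs with hξη
    · exact norm_mul_norm_le_of_symbol_bound (Nat.le_ceil m) hc0 hc1.le hC.le hD.le hFD hg hξη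
    · positivity
  have hsum := (hw.mul_left _).of_nonneg_of_le (fun η => by split_ifs <;> positivity) hbound
  refine ⟨hsum, (hsum.tsum_le_tsum hbound (hw.mul_left _)).trans_eq ?_⟩
  rw [tsum_mul_left]
  ring

theorem stmt_13 (N : ℕ) (hN : 1 ≤ N) (m : ℝ) (p : ℕ) (c : ℝ) (hc0 : 0 < c) (hc1 : c < 1)
    (C : ℝ) (hC : 0 < C) (F : (Fin N → ℤ) → (Fin N → ℤ) → ℂ) (hF : SymbolBounds N m F)
    (g : (Fin N → ℤ) → ℂ)
    (hg : ∀ ζ : Fin N → ℤ, ‖g ζ‖ ≤ C * (1 + ‖iZ N ζ‖) ^ p) :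
    ∀ k : ℕ, ∃ D' > (0 : ℝ), ∀ ξ : Fin N → ℤ,
      Summable (fun η : Fin N → ℤ =>
        if c * ‖iZ N ξ‖ ≤ ‖iZ N η‖ then
          ‖F η (ξ - η)‖ * ‖g (ξ - η)‖ else 0) ∧
      (∑' η : Fin N → ℤ,
        if c * ‖iZ N ξ‖ ≤ ‖iZ N η‖ then
          ‖F η (ξ - η)‖ * ‖g (ξ - η)‖ else 0)
        ≤ D' * ((1 + ‖iZ N ξ‖) ^ k)⁻¹ :=
  stmt_13_general N m p c hc0 hc1 C hC F hF g hg
end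

section
/- Let N ≥ 1, m ∈ ℝ, p ∈ ℕ, C > 0, and let Γ, Γ′ ⊆ ℝ^N ∖ {0} be open cones with Γ′ ⋐ Γ. Let F : ℤ^N × ℤ^N → ℂ satisfy symbol-type bounds of order m and additionally F(θ, ζ) = 0 for every θ ∈ ℤ^N and every ζ ∈ Γ ∩ ℤ^N. Let g : ℤ^N → ℂ satisfy |g(ζ)| ≤ C(1+|ζ|)^p for all ζ ∈ ℤ^N. Then for every k ∈ ℕ there exists C′_k > 0 such that Σ_{η ∈ ℤ^N} |F(ξ−η, η)| · |g(η)| ≤ C′_k (1+|ξ|)^(−k) for every ξ ∈ Γ′ ∩ ℤ^N. -/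
/-- An open cone in `ℝᴺ ∖ {0}`. -/
def IsOpenCone (N : ℕ) (Γ : Set (EuclideanSpace ℝ (Fin N))) : Prop :=
  IsOpen Γ ∧ (0 : EuclideanSpace ℝ (Fin N)) ∉ Γ ∧
    ∀ ξ ∈ Γ, ∀ l : ℝ, 0 < l → l • ξ ∈ Γ

/-!
Only `η` outside `Γ` contribute, and for such `η` and `ξ ∈ Γ'` compactness of
`closure (Γ' ∩ S^{N-1}) ⊆ Γ` gives `1 + |ξ - η| ≥ c (1 + |ξ| + |η|)`. So the rapid decay of
`F (ξ - η) η` in its first argument becomes decay in both `ξ` and `η`, which absorbs the polynomial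
growth of order `m` of `F` and of order `p` of `g` and leaves the summable weight
`(1 + |η|)^{-(N+1)}` over the lattice `ℤᴺ`.
-/

lemma iZ_eq_zero_iff {N : ℕ} {η : Fin N → ℤ} : iZ N η = 0 ↔ η = 0 := by
  simp [iZ, funext_iff, WithLp.ext_iff]

open Module in
lemma summable_norm_iZ_inv_pow (N n : ℕ) (hn : N < n) :
    Summable fun η : Fin N → ℤ => ‖iZ N η‖⁻¹ ^ n := by
  let e := (EuclideanSpace.basisFun (Fin N) ℝ).toBasis
  let b := e.restrictScalars ℤ
  have hrank : finrank ℤ (Submodule.span ℤ (Set.range e)) < n := by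
    rwa [finrank_eq_card_basis b, Fintype.card_fin]
  refine ((ZLattice.summable_norm_pow_inv _ n hrank).comp_injective
    b.equivFun.symm.injective).congr fun η => ?_
  have : (b.equivFun.symm η : EuclideanSpace ℝ (Fin N)) = iZ N η := by
    ext i
    rw [Basis.equivFun_symm_apply, Submodule.coe_sum]
    simp only [Submodule.coe_smul_of_tower, Basis.restrictScalars_apply, b, e]
    simp [iZ, Pi.single_apply]
  rw [Function.comp_apply, ← this]
  rfl

lemma summable_one_add_norm_iZ_pow_inv (N n : ℕ) (hn : N < n) :
    Summable fun η : Fin N → ℤ => ((1 + ‖iZ N η‖) ^ n)⁻¹ := by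
  refine (summable_norm_iZ_inv_pow N n hn).of_norm_bounded_eventually ?_
  filter_upwards [Filter.eventually_cofinite_ne 0] with η hη
  have hpos : 0 < ‖iZ N η‖ := norm_pos_iff.2 (iZ_eq_zero_iff.not.2 hη)
  rw [Real.norm_of_nonneg (by positivity), ← inv_pow]
  gcongr
  linarith

section Cone

variable {E : Type*} [NormedAddCommGroup E] [NormedSpace ℝ E] [ProperSpace E] {Γ Γ' : Set E}

lemma exists_pos_mul_norm_le_norm_sub_of_closure_subset (hΓ : IsOpen Γ)
    (hΓsmul : ∀ ξ ∈ Γ, ∀ l : ℝ, 0 < l → l • ξ ∈ Γ)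
    (hΓ'smul : ∀ ξ ∈ Γ', ∀ l : ℝ, 0 < l → l • ξ ∈ Γ')
    (hcc : closure (Γ' ∩ Metric.sphere 0 1) ⊆ Γ) :
    ∃ δ > 0, ∀ x ∈ Γ', ∀ y ∉ Γ, δ * ‖x‖ ≤ ‖x - y‖ := by
  have hK : IsCompact (closure (Γ' ∩ Metric.sphere (0 : E) 1)) :=
    (Metric.isBounded_sphere.subset Set.inter_subset_right).isCompact_closure
  obtain ⟨δ, hδ, hthick⟩ := hK.exists_thickening_subset_open hΓ hcc
  refine ⟨δ, hδ, fun x hx y hy => ?_⟩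
  rcases eq_or_ne x 0 with rfl | hx0
  · simp
  have hxn : 0 < ‖x‖ := norm_pos_iff.2 hx0
  -- rescaling by `‖x‖⁻¹` puts `x` on the unit sphere and keeps `y` off the cone `Γ`
  have hu : ‖x‖⁻¹ • x ∈ closure (Γ' ∩ Metric.sphere 0 1) :=
    subset_closure ⟨hΓ'smul x hx _ (inv_pos.2 hxn), by simp [norm_smul, hxn.ne']⟩
  have hv : ‖x‖⁻¹ • y ∉ Metric.thickening δ (closure (Γ' ∩ Metric.sphere 0 1)) :=
    fun h => hy <| by simpa [smul_smul, hxn.ne'] using hΓsmul _ (hthick h) ‖x‖ hxn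
  have hdist : δ ≤ dist (‖x‖⁻¹ • y) (‖x‖⁻¹ • x) :=
    not_lt.1 fun h => hv (Metric.mem_thickening_iff.2 ⟨_, hu, h⟩)
  rw [dist_eq_norm, ← smul_sub, norm_smul, norm_inv, norm_norm, norm_sub_rev,
    le_inv_mul_iff₀ hxn, mul_comm] at hdist
  exact hdist

lemma exists_pos_mul_one_add_norm_add_norm_le (hΓ : IsOpen Γ)
    (hΓsmul : ∀ ξ ∈ Γ, ∀ l : ℝ, 0 < l → l • ξ ∈ Γ)
    (hΓ'smul : ∀ ξ ∈ Γ', ∀ l : ℝ, 0 < l → l • ξ ∈ Γ')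
    (hcc : closure (Γ' ∩ Metric.sphere 0 1) ⊆ Γ) :
    ∃ c > 0, ∀ x ∈ Γ', ∀ y ∉ Γ, c * (1 + ‖x‖ + ‖y‖) ≤ 1 + ‖x - y‖ := by
  obtain ⟨δ, hδ, hsep⟩ :=
    exists_pos_mul_norm_le_norm_sub_of_closure_subset hΓ hΓsmul hΓ'smul hcc
  refine ⟨min δ 1 / 3, by positivity, fun x hx y hy => ?_⟩
  have hxy : min δ 1 * ‖x‖ ≤ ‖x - y‖ := (mul_le_mul_of_nonneg_right (min_le_left _ _)
    (norm_nonneg x)).trans (hsep x hx y hy)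
  have htri : ‖y‖ ≤ ‖x‖ + ‖x - y‖ := norm_le_norm_add_norm_sub x y
  have h1 : min δ 1 ≤ 1 := min_le_right _ _
  nlinarith [norm_nonneg x, norm_nonneg (x - y), norm_nonneg y, lt_min hδ one_pos]

lemma exists_pos_one_add_norm_sub_pow_inv_le (hΓ : IsOpen Γ)
    (hΓsmul : ∀ ξ ∈ Γ, ∀ l : ℝ, 0 < l → l • ξ ∈ Γ)
    (hΓ'smul : ∀ ξ ∈ Γ', ∀ l : ℝ, 0 < l → l • ξ ∈ Γ')
    (hcc : closure (Γ' ∩ Metric.sphere 0 1) ⊆ Γ) :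
    ∃ c > 0, ∀ x ∈ Γ', ∀ y ∉ Γ, ∀ k l : ℕ,
      ((1 + ‖x - y‖) ^ (k + l))⁻¹ ≤ (c ^ (k + l))⁻¹ * ((1 + ‖x‖) ^ k)⁻¹ * ((1 + ‖y‖) ^ l)⁻¹ := by
  obtain ⟨c, hc, hsep⟩ := exists_pos_mul_one_add_norm_add_norm_le hΓ hΓsmul hΓ'smul hcc
  refine ⟨c, hc, fun x hx y hy k l => ?_⟩
  rw [← mul_inv, ← mul_inv]
  refine inv_anti₀ (by positivity) ?_
  calc c ^ (k + l) * (1 + ‖x‖) ^ k * (1 + ‖y‖) ^ l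
      ≤ c ^ (k + l) * (1 + ‖x‖ + ‖y‖) ^ k * (1 + ‖x‖ + ‖y‖) ^ l := by
        have := norm_nonneg x; have := norm_nonneg y
        gcongr ?_ * ?_ ^ k * ?_ ^ l <;> linarith
    _ = (c * (1 + ‖x‖ + ‖y‖)) ^ (k + l) := by rw [mul_pow, pow_add, pow_add]; ring
    _ ≤ (1 + ‖x - y‖) ^ (k + l) := by gcongr; exact hsep x hx y hy

end Cone

namespace SymbolBounds

variable {N : ℕ} {m : ℝ} {F : (Fin N → ℤ) → (Fin N → ℤ) → ℂ}

lemma mono {m' : ℝ} (hF : SymbolBounds N m F) (hm : m ≤ m') : SymbolBounds N m' F := by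
  intro k
  obtain ⟨D, hD, hFD⟩ := hF k
  refine ⟨D, hD, fun η ζ => (hFD η ζ).trans ?_⟩
  gcongr
  exact le_add_of_nonneg_right (norm_nonneg _)

lemma mul_right {g : (Fin N → ℤ) → ℂ} {C q : ℝ} (hF : SymbolBounds N m F)
    (hg : ∀ ζ, ‖g ζ‖ ≤ C * (1 + ‖iZ N ζ‖) ^ q) :
    SymbolBounds N (m + q) (fun η ζ => F η ζ * g ζ) := by
  intro k
  obtain ⟨D, hD, hFD⟩ := hF k
  refine ⟨D * max C 1, by positivity, fun η ζ => ?_⟩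
  have h1 : 0 < 1 + ‖iZ N ζ‖ := by positivity
  rw [norm_mul, Real.rpow_add h1]
  calc ‖F η ζ‖ * ‖g ζ‖
      ≤ D * ((1 + ‖iZ N η‖) ^ k)⁻¹ * (1 + ‖iZ N ζ‖) ^ m *
          (max C 1 * (1 + ‖iZ N ζ‖) ^ q) := by
        gcongr
        · exact hFD η ζ
        · exact (hg ζ).trans (by gcongr; exact le_max_left _ _)
    _ = _ := by ring

theorem exists_summable_tsum_le_of_eq_zero_on_cone {M : ℕ} (hF : SymbolBounds N M F)
    {Γ Γ' : Set (EuclideanSpace ℝ (Fin N))} (hΓ : IsOpenCone N Γ) (hΓ' : IsOpenCone N Γ')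
    (hcc : closure (Γ' ∩ Metric.sphere 0 1) ⊆ Γ) (hvan : ∀ θ ζ, iZ N ζ ∈ Γ → F θ ζ = 0)
    (k : ℕ) :
    ∃ C' > (0 : ℝ), ∀ ξ, iZ N ξ ∈ Γ' → Summable (fun η => ‖F (ξ - η) η‖) ∧
      ∑' η, ‖F (ξ - η) η‖ ≤ C' * ((1 + ‖iZ N ξ‖) ^ k)⁻¹ := by
  obtain ⟨c, hc, hsep⟩ := exists_pos_one_add_norm_sub_pow_inv_le hΓ.1 hΓ.2.2 hΓ'.2.2 hcc
  -- decay of order `k` is kept for `ξ`, `M` absorbs the symbol growth in `η`, and `N + 1`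
  -- leaves a summable weight on `ℤᴺ`
  obtain ⟨D, hD, hFD⟩ := hF (k + (M + (N + 1)))
  set A := D * (c ^ (k + (M + (N + 1))))⁻¹
  set w : (Fin N → ℤ) → ℝ := fun η => ((1 + ‖iZ N η‖) ^ (N + 1))⁻¹
  have hw : Summable w := summable_one_add_norm_iZ_pow_inv N (N + 1) N.lt_succ_self
  refine ⟨A * ∑' η, w η + 1, by positivity, fun ξ hξ => ?_⟩
  set x := iZ N ξ
  have hle : ∀ η, ‖F (ξ - η) η‖ ≤ A * ((1 + ‖x‖) ^ k)⁻¹ * w η := by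
    intro η
    by_cases hη : iZ N η ∈ Γ
    · rw [hvan _ _ hη, norm_zero]
      positivity
    calc ‖F (ξ - η) η‖
        ≤ D * ((1 + ‖x - iZ N η‖) ^ (k + (M + (N + 1))))⁻¹ * (1 + ‖iZ N η‖) ^ M := by
          simpa [iZ_sub, Real.rpow_natCast] using hFD (ξ - η) η
      _ ≤ D * ((c ^ (k + (M + (N + 1))))⁻¹ * ((1 + ‖x‖) ^ k)⁻¹ *
            ((1 + ‖iZ N η‖) ^ (M + (N + 1)))⁻¹) * (1 + ‖iZ N η‖) ^ M := by
          gcongr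
          exact hsep x hξ _ hη _ _
      _ = A * ((1 + ‖x‖) ^ k)⁻¹ * w η := by
          simp only [A, w, pow_add _ M]
          field_simp
  have hs : Summable fun η => ‖F (ξ - η) η‖ :=
    (hw.mul_left _).of_nonneg_of_le (fun _ => norm_nonneg _) hle
  refine ⟨hs, ?_⟩
  calc ∑' η, ‖F (ξ - η) η‖
      ≤ ∑' η, A * ((1 + ‖x‖) ^ k)⁻¹ * w η := hs.tsum_le_tsum hle (hw.mul_left _)
    _ = A * (∑' η, w η) * ((1 + ‖x‖) ^ k)⁻¹ := by rw [tsum_mul_left]; ring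
    _ ≤ (A * ∑' η, w η + 1) * ((1 + ‖x‖) ^ k)⁻¹ := by gcongr; linarith

end SymbolBounds

theorem stmt_16_general (N : ℕ) (m : ℝ) (p : ℕ) (C : ℝ)
    (Γ Γ' : Set (EuclideanSpace ℝ (Fin N)))
    (hΓ : IsOpenCone N Γ) (hΓ' : IsOpenCone N Γ')
    (hcc : closure (Γ' ∩ Metric.sphere (0 : EuclideanSpace ℝ (Fin N)) 1) ⊆ Γ)
    (F : (Fin N → ℤ) → (Fin N → ℤ) → ℂ) (hF : SymbolBounds N m F)
    (hFvan : ∀ θ ζ : Fin N → ℤ, iZ N ζ ∈ Γ → F θ ζ = 0)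
    (g : (Fin N → ℤ) → ℂ)
    (hg : ∀ ζ : Fin N → ℤ, ‖g ζ‖ ≤ C * (1 + ‖iZ N ζ‖) ^ p) :
    ∀ k : ℕ, ∃ C' > (0 : ℝ), ∀ ξ : Fin N → ℤ, iZ N ξ ∈ Γ' →
      Summable (fun η : Fin N → ℤ =>
        ‖F (ξ - η) η‖ * ‖g η‖) ∧
      (∑' η : Fin N → ℤ, ‖F (ξ - η) η‖ * ‖g η‖)
        ≤ C' * ((1 + ‖iZ N ξ‖) ^ k)⁻¹ := by
  intro k
  have hFg : SymbolBounds N ⌈m + p⌉₊ (fun θ ζ => F θ ζ * g ζ) :=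
    (hF.mul_right (q := p) fun ζ => by simpa [Real.rpow_natCast] using hg ζ).mono (Nat.le_ceil _)
  obtain ⟨C', hC', hdecay⟩ := hFg.exists_summable_tsum_le_of_eq_zero_on_cone hΓ hΓ' hcc
    (fun θ ζ hζ => by simp [hFvan θ ζ hζ]) k
  exact ⟨C', hC', fun ξ hξ => by simpa only [norm_mul] using hdecay ξ hξ⟩

theorem stmt_16 (N : ℕ) (hN : 1 ≤ N) (m : ℝ) (p : ℕ) (C : ℝ) (hC : 0 < C)
    (Γ Γ' : Set (EuclideanSpace ℝ (Fin N)))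
    (hΓ : IsOpenCone N Γ) (hΓ' : IsOpenCone N Γ')
    (hcc : closure (Γ' ∩ Metric.sphere (0 : EuclideanSpace ℝ (Fin N)) 1) ⊆ Γ)
    (F : (Fin N → ℤ) → (Fin N → ℤ) → ℂ) (hF : SymbolBounds N m F)
    (hFvan : ∀ θ ζ : Fin N → ℤ, iZ N ζ ∈ Γ → F θ ζ = 0)
    (g : (Fin N → ℤ) → ℂ)
    (hg : ∀ ζ : Fin N → ℤ, ‖g ζ‖ ≤ C * (1 + ‖iZ N ζ‖) ^ p) :
    ∀ k : ℕ, ∃ C' > (0 : ℝ), ∀ ξ : Fin N → ℤ, iZ N ξ ∈ Γ' →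
      Summable (fun η : Fin N → ℤ =>
        ‖F (ξ - η) η‖ * ‖g η‖) ∧
      (∑' η : Fin N → ℤ, ‖F (ξ - η) η‖ * ‖g η‖)
        ≤ C' * ((1 + ‖iZ N ξ‖) ^ k)⁻¹ :=
  stmt_16_general N m p C Γ Γ' hΓ hΓ' hcc F hF hFvan g hg
end
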